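/- arXiv:1308.5534 — 12 statements merged into one kernel-verified Lean document; each statement's English description precedes it below -/
import Mathlib

section
/- Let A ≠ 0 be a real number and let (c_n) and (d_n) be real sequences with lim_n c_n = 0 and lim_n d_n = 1. Then (1 + (A d_n / n)(1 + c_n))^n = e^A (1 + A c_n + A(d_n − 1) + E_n), where the error E_n satisfies: there exist a constant M > 0 and an index N such that for all n ≥ N, |E_n| ≤ M (1/n + c_n^2 + (d_n − 1)^2). -/
open Filter

lemma key (t : ℝ) (n : ℕ) (hn : 1 ≤ n) (h2 : (n:ℝ) / 2 ≤ (n:ℝ) + t) :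
    Real.exp t * (1 - 2 * t ^ 2 / n) ≤ (1 + t / n) ^ n ∧ (1 + t / n) ^ n ≤ Real.exp t := by
  have hn0 : (0:ℝ) < n := by exact_mod_cast hn
  have hnt : (0:ℝ) < (n:ℝ) + t := lt_of_lt_of_le (by positivity) h2
  have hb : (0:ℝ) < 1 + t / n := by
    have h : 1 + t / n = ((n:ℝ) + t) / n := by field_simp
    rw [h]; positivity
  constructor
  · have hlog : t / n - (t/n)^2 / (1 + t/n) ≤ Real.log (1 + t / n) := by
      have h1 : Real.log (1/(1 + t/n)) ≤ 1/(1 + t/n) - 1 := Real.log_le_sub_one_of_pos (by positivity)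
      rw [Real.log_div one_ne_zero (ne_of_gt hb), Real.log_one] at h1
      have : -(1/(1 + t/n) - 1) ≤ Real.log (1 + t/n) := by linarith
      refine le_trans (le_of_eq ?_) this
      field_simp
      ring
    have hexp : (1 + t/n)^n = Real.exp ((n:ℝ) * Real.log (1 + t/n)) := by
      rw [Real.exp_nat_mul, Real.exp_log hb]
    rw [hexp]
    have h3 : t - 2 * t^2 / n ≤ (n:ℝ) * Real.log (1 + t/n) := by
      have h4 : (n:ℝ) * (t / n - (t/n)^2 / (1 + t/n)) ≤ (n:ℝ) * Real.log (1 + t/n) := by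
        apply mul_le_mul_of_nonneg_left hlog (le_of_lt hn0)
      refine le_trans ?_ h4
      have he : (n:ℝ) * (t / n - (t/n)^2 / (1 + t/n)) = t - t^2 / ((n:ℝ) + t) := by
        field_simp
      rw [he]
      have : t^2 / ((n:ℝ) + t) ≤ 2 * t^2 / n := by
        rw [div_le_div_iff₀ hnt hn0]
        nlinarith [sq_nonneg t]
      linarith
    calc Real.exp t * (1 - 2 * t ^ 2 / n) ≤ Real.exp t * Real.exp (-(2 * t^2 / n)) := by
          apply mul_le_mul_of_nonneg_left _ (Real.exp_pos t).le
          linarith [Real.add_one_le_exp (-(2 * t^2 / n))]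
      _ = Real.exp (t - 2 * t^2 / n) := by rw [← Real.exp_add]; ring_nf
      _ ≤ Real.exp ((n:ℝ) * Real.log (1 + t/n)) := Real.exp_le_exp.mpr h3
  · calc (1 + t/n)^n ≤ (Real.exp (t/n))^n := by
          apply pow_le_pow_left₀ hb.le
          linarith [Real.add_one_le_exp (t/n)]
      _ = Real.exp t := by rw [← Real.exp_nat_mul]; congr 1; field_simp

set_option maxHeartbeats 1000000 in
/-- Lemma (Gasull–López-Salcedo–Utzet): if `A ≠ 0`, `c_n → 0` and `d_n → 1`, then
`(1 + (A d_n / n)(1 + c_n))^n = e^A (1 + A c_n + A (d_n - 1) + E_n)` where the error `E_n`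
is eventually bounded by `M (1/n + c_n² + (d_n - 1)²)` for some constant `M > 0`. -/
theorem stmt_0 (A : ℝ) (hA : A ≠ 0) (c d : ℕ → ℝ)
    (hc : Tendsto c atTop (nhds 0)) (hd : Tendsto d atTop (nhds 1)) :
    ∃ E : ℕ → ℝ,
      (∀ n : ℕ, (1 + (A * d n / n) * (1 + c n)) ^ n
          = Real.exp A * (1 + A * c n + A * (d n - 1) + E n)) ∧
      ∃ M > (0 : ℝ), ∃ N : ℕ, ∀ n ≥ N,
        |E n| ≤ M * (1 / n + (c n) ^ 2 + (d n - 1) ^ 2) := by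
  refine ⟨fun n => (1 + (A * d n / n) * (1 + c n)) ^ n * Real.exp (-A)
      - (1 + A * c n + A * (d n - 1)), fun n => ?_, ?_⟩
  · rw [Real.exp_neg]
    have h := Real.exp_pos A
    field_simp
    ring
  · -- eventual bounds
    have hδ : Tendsto (fun n => d n - 1) atTop (nhds 0) := by
      simpa using hd.sub (tendsto_const_nhds (x := (1:ℝ)))
    have hv : Tendsto (fun n => A * (c n + (d n - 1) + c n * (d n - 1))) atTop (nhds 0) := by
      have h := (hc.add hδ).add (hc.mul hδ)
      simpa using (tendsto_const_nhds (x := A)).mul h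
    obtain ⟨N1, hN1⟩ := Metric.tendsto_atTop.mp hc 1 one_pos
    obtain ⟨N2, hN2⟩ := Metric.tendsto_atTop.mp hδ 1 one_pos
    obtain ⟨N3, hN3⟩ := Metric.tendsto_atTop.mp hv 1 one_pos
    set N0 : ℕ := ⌈2 * (|A| + 1)⌉₊ + 1 with hN0def
    refine ⟨6*(|A|+1)^2 + 8*A^2 + |A| + 1, by positivity, max (max N1 N2) (max N3 N0), ?_⟩
    intro n hn
    have hn1 : n ≥ N1 := le_trans (le_trans (le_max_left _ _) (le_max_left _ _)) hn
    have hn2 : n ≥ N2 := le_trans (le_trans (le_max_right _ _) (le_max_left _ _)) hn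
    have hn3 : n ≥ N3 := le_trans (le_trans (le_max_left _ _) (le_max_right _ _)) hn
    have hn4 : n ≥ N0 := le_trans (le_trans (le_max_right _ _) (le_max_right _ _)) hn
    have hcb : |c n| ≤ 1 := by
      have := hN1 n hn1; rw [Real.dist_eq, sub_zero] at this; linarith
    have hdb : |d n - 1| ≤ 1 := by
      have := hN2 n hn2; rw [Real.dist_eq, sub_zero] at this; linarith
    set v : ℝ := A * (c n + (d n - 1) + c n * (d n - 1)) with hvdef
    have hvb : |v| ≤ 1 := by
      have := hN3 n hn3; rw [Real.dist_eq, sub_zero] at this; exact this.le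
    have hnge : (2 * (|A| + 1)) ≤ (n : ℝ) := by
      calc (2 * (|A| + 1)) ≤ (⌈2 * (|A| + 1)⌉₊ : ℝ) := Nat.le_ceil _
        _ ≤ (N0 : ℝ) := by exact_mod_cast Nat.le_succ _
        _ ≤ (n : ℝ) := by exact_mod_cast hn4
    have hn1' : 1 ≤ n := by
      have : (1:ℝ) ≤ (n:ℝ) := by nlinarith [abs_nonneg A]
      exact_mod_cast this
    set t : ℝ := A + v with htdef
    have htb : |t| ≤ |A| + 1 := (abs_add_le A v).trans (by linarith)
    have h2 : (n:ℝ) / 2 ≤ (n:ℝ) + t := by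
      have := abs_le.mp htb
      linarith [this.1]
    obtain ⟨hlow, hup⟩ := key t n hn1' h2
    -- rewrite the expression
    have hexpr : (A * d n / n) * (1 + c n) = t / n := by
      rw [htdef, hvdef]; field_simp; ring
    simp only
    rw [hexpr]
    set P : ℝ := (1 + t / n) ^ n with hPdef
    set ε : ℝ := P * Real.exp (-t) - 1 with hεdef
    have hexpt : Real.exp (-t) > 0 := Real.exp_pos _
    have hεub : ε ≤ 0 := by
      have : P * Real.exp (-t) ≤ Real.exp t * Real.exp (-t) := by
        apply mul_le_mul_of_nonneg_right hup hexpt.le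
      rw [← Real.exp_add] at this; simp at this
      linarith
    have hεlb : -(2 * t^2 / n) ≤ ε := by
      have h5 : Real.exp t * (1 - 2 * t ^ 2 / n) * Real.exp (-t) ≤ P * Real.exp (-t) := by
        apply mul_le_mul_of_nonneg_right hlow hexpt.le
      have h6 : Real.exp t * (1 - 2 * t ^ 2 / n) * Real.exp (-t) = 1 - 2 * t^2 / n := by
        rw [mul_comm (Real.exp t) _, mul_assoc, ← Real.exp_add]; simp
      rw [h6] at h5
      simp only [hεdef]; linarith
    have hn0 : (0:ℝ) < n := by exact_mod_cast hn1'
    have hεb : |ε| ≤ 2 * (|A|+1)^2 / n := by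
      rw [abs_le]
      constructor
      · refine le_trans ?_ hεlb
        have ht2 : t^2 ≤ (|A|+1)^2 := by nlinarith [sq_abs t, abs_nonneg t]
        have : 2 * t^2 / n ≤ 2*(|A|+1)^2/n := by gcongr
        linarith
      · refine le_trans hεub (by positivity)
    -- decompose E
    have hPexp : P * Real.exp (-A) = (1 + ε) * Real.exp v := by
      rw [hεdef]
      have : Real.exp (-A) = Real.exp (-t) * Real.exp v := by
        rw [← Real.exp_add]; congr 1; rw [htdef]; ring
      rw [this]; ring
    set r : ℝ := Real.exp v - 1 - v with hrdef
    have hE : P * Real.exp (-A) - (1 + A * c n + A * (d n - 1))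
        = A * (c n * (d n - 1)) + r + ε * Real.exp v := by
      rw [hPexp, hrdef, hvdef]; ring
    rw [hE]
    -- bounds for the three pieces
    have hrb : |r| ≤ v^2 := Real.abs_exp_sub_one_sub_id_le hvb
    have hvsq : v^2 ≤ 8 * A^2 * ((c n)^2 + (d n - 1)^2) := by
      have h7 : |v| ≤ |A| * (|c n| + 2 * |d n - 1|) := by
        rw [hvdef, abs_mul]
        apply mul_le_mul_of_nonneg_left _ (abs_nonneg A)
        calc |c n + (d n - 1) + c n * (d n - 1)| ≤ |c n| + |d n - 1| + |c n * (d n - 1)| := by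
              exact (abs_add_le _ _).trans (by gcongr; exact abs_add_le _ _)
          _ ≤ |c n| + 2 * |d n - 1| := by
              rw [abs_mul]
              nlinarith [abs_nonneg (d n - 1)]
      have h10 : |v|^2 ≤ (|A| * (|c n| + 2 * |d n - 1|))^2 :=
        pow_le_pow_left₀ (abs_nonneg v) h7 2
      rw [sq_abs] at h10
      have h11 : (|A| * (|c n| + 2 * |d n - 1|))^2 = A^2 * (|c n| + 2 * |d n - 1|)^2 := by
        rw [mul_pow, sq_abs]
      rw [h11] at h10
      have h12 : (|c n| + 2 * |d n - 1|)^2 ≤ 8 * ((c n)^2 + (d n - 1)^2) := by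
        nlinarith [sq_nonneg (|c n| - 2*|d n - 1|), sq_abs (c n), sq_abs (d n - 1)]
      have h13 : A^2 * (|c n| + 2 * |d n - 1|)^2 ≤ A^2 * (8 * ((c n)^2 + (d n - 1)^2)) :=
        mul_le_mul_of_nonneg_left h12 (sq_nonneg A)
      linarith
    have hcd : |A * (c n * (d n - 1))| ≤ |A| * ((c n)^2 + (d n - 1)^2) / 2 := by
      rw [abs_mul, abs_mul]
      have : |c n| * |d n - 1| ≤ ((c n)^2 + (d n - 1)^2) / 2 := by
        nlinarith [sq_nonneg (|c n| - |d n - 1|), sq_abs (c n), sq_abs (d n - 1)]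
      nlinarith [abs_nonneg A]
    have hεe : |ε * Real.exp v| ≤ 6 * (|A|+1)^2 * (1 / n) := by
      rw [abs_mul, abs_of_pos (Real.exp_pos v)]
      have he3 : Real.exp v ≤ 3 := by
        calc Real.exp v ≤ Real.exp 1 := Real.exp_le_exp.mpr (abs_le.mp hvb).2
          _ ≤ 3 := by linarith [Real.exp_one_lt_d9]
      calc |ε| * Real.exp v ≤ (2 * (|A|+1)^2 / n) * 3 := by
            apply mul_le_mul hεb he3 (Real.exp_pos v).le (by positivity)
        _ = 6 * (|A|+1)^2 * (1 / n) := by ring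
    calc |A * (c n * (d n - 1)) + r + ε * Real.exp v|
        ≤ |A * (c n * (d n - 1))| + |r| + |ε * Real.exp v| := by
          exact (abs_add_le _ _).trans (by gcongr; exact abs_add_le _ _)
      _ ≤ (6*(|A|+1)^2 + 8*A^2 + |A| + 1) * (1 / n + (c n) ^ 2 + (d n - 1) ^ 2) := by
          have hn5 : (0:ℝ) ≤ 1 / n := by positivity
          have hS : (0:ℝ) ≤ (c n)^2 + (d n - 1)^2 := by positivity
          nlinarith [mul_nonneg (by positivity : (0:ℝ) ≤ 8*A^2+|A|+1) hn5,
            mul_nonneg (by positivity : (0:ℝ) ≤ 6*(|A|+1)^2 + |A|/2 + 1) hS]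
end

section
/- For every x ∈ ℝ there exist a constant M > 0 and an index N such that for all n ≥ N, |F(a_n x + b_n)^n − Λ(x)| ≤ M Λ(x) / log n. Equivalently, F^n(a_n x + b_n) = Λ(x)(1 + O(1/b_n^τ)) = Λ(x)(1 + O(1/log n)). -/
open Filter Set Asymptotics Topology Real

/-!
Write `a_n x + b_n = b_n (1 + t_n)` with `t_n = x / (C τ b_n^τ - α) = O(b_n^{-τ})`. Expanding
`log (1 + t)` and `(1 + t)^τ` to first and second order, the terms linear in `t_n` cancel against
`x = t_n (C τ b_n^τ - α)`, so `n (1 - F(a_n x + b_n)) = exp (-x + ε_n)` with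
`ε_n = O(b_n^{-τ}) = O(1 / log n)`; the last step is `log n ≤ C b_n^τ`, read off from the equation
defining `b_n`. Finally `(1 - y)^n` differs from `exp (-n y)` by at most `n y² = O(1/n)`, and
`exp (-exp (-x + ε)) - Λ(x) = O(ε)`.
-/

lemma abs_one_sub_pow_sub_exp_le {y : ℝ} (hy₀ : 0 ≤ y) (hy₁ : y ≤ 1) (n : ℕ) :
    |(1 - y) ^ n - exp (-(n * y))| ≤ n * y ^ 2 := by
  have h₁ : |1 - y| ≤ 1 := abs_le.2 ⟨by linarith, by linarith⟩
  have h₂ : |exp (-y)| ≤ 1 := by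
    rw [abs_of_pos (exp_pos _)]
    exact exp_le_one_iff.2 (by linarith)
  have hstep : |1 - y - exp (-y)| ≤ y ^ 2 := by
    rw [abs_sub_comm, show exp (-y) - (1 - y) = exp (-y) - 1 - -y by ring, ← neg_sq]
    exact abs_exp_sub_one_sub_id_le (by rwa [abs_neg, abs_of_nonneg hy₀])
  calc |(1 - y) ^ n - exp (-(n * y))| = |(1 - y) ^ n - exp (-y) ^ n| := by
        rw [← exp_nat_mul, mul_neg]
  _ ≤ |1 - y - exp (-y)| * n * max |1 - y| |exp (-y)| ^ (n - 1) := abs_pow_sub_pow_le ..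
  _ ≤ y ^ 2 * n * 1 := by gcongr; exact pow_le_one₀ (by positivity) (max_le h₁ h₂)
  _ = n * y ^ 2 := by ring

lemma one_add_rpow_sub_one_sub_mul_isBigO (a : ℝ) :
    (fun t : ℝ => (1 + t) ^ a - 1 - a * t) =O[𝓝 0] fun t => t ^ 2 := by
  have h := one_add_rpow_hasFPowerSeriesAt_zero (a := a) |>.isBigO_sub_partialSum_pow 2
  simp only [zero_add, FormalMultilinearSeries.partialSum, binomialSeries,
    FormalMultilinearSeries.apply_eq_prod_smul_coeff, Finset.prod_const, Finset.card_univ,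
    Fintype.card_fin, FormalMultilinearSeries.coeff_ofScalars, smul_eq_mul, Finset.sum_range_succ,
    Finset.range_one, Finset.sum_singleton, pow_zero, Ring.choose_zero_right', mul_one, pow_one,
    Ring.choose_one_right', norm_eq_abs, sq_abs] at h
  simpa only [sub_sub, mul_comm] using h

lemma tendsto_atTop_of_antitoneOn_of_tendsto_zero {ι : Type*} {l : Filter ι} {g : ℝ → ℝ}
    {x₁ : ℝ} {b : ι → ℝ} (hg : AntitoneOn g (Ici x₁)) (hpos : ∀ x ≥ x₁, 0 < g x)
    (hb : ∀ᶠ i in l, x₁ ≤ b i) (hgb : Tendsto (g ∘ b) l (𝓝 0)) : Tendsto b l atTop := by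
  refine tendsto_atTop.2 fun B => ?_
  have hB : x₁ ≤ max B x₁ := le_max_right _ _
  filter_upwards [hb, hgb.eventually_lt_const (hpos _ hB)] with i hbi hgi
  by_contra! hlt
  exact (hg hbi hB (hlt.trans_le (le_max_left _ _)).le).not_gt hgi

lemma isBigO_div_const_mul_sub {ι : Type*} {l : Filter ι} {β : ι → ℝ} {c : ℝ} (hc : 0 < c)
    (hβ : Tendsto β l atTop) (x α : ℝ) :
    (fun i => x / (c * β i - α)) =O[l] fun i => (β i)⁻¹ := by
  refine IsBigO.of_bound (2 * |x| / c) ?_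
  filter_upwards [hβ.eventually_ge_atTop (2 * α / c), hβ.eventually_gt_atTop 0] with i hα hβ₀
  have hD : c * β i / 2 ≤ c * β i - α := by
    have := (div_le_iff₀' hc).1 hα
    linarith
  have hD₀ : 0 < c * β i / 2 := by positivity
  rw [norm_div, norm_inv, norm_eq_abs, norm_eq_abs, norm_eq_abs, abs_of_pos (hD₀.trans_le hD),
    abs_of_pos hβ₀]
  calc |x| / (c * β i - α) ≤ |x| / (c * β i / 2) := by gcongr
  _ = 2 * |x| / c * (β i)⁻¹ := by field_simp

lemma tendsto_log_natCast_atTop : Tendsto (fun n : ℕ => log n) atTop atTop :=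
  tendsto_log_atTop.comp tendsto_natCast_atTop_atTop

lemma isBigO_inv_natCast_inv_log :
    (fun n : ℕ => (n : ℝ)⁻¹) =O[atTop] fun n : ℕ => (log n)⁻¹ :=
  (isLittleO_log_id_atTop.comp_tendsto tendsto_natCast_atTop_atTop).isBigO.inv_rev
    (tendsto_log_natCast_atTop.eventually_gt_atTop 0 |>.mono
      fun _ hn h => absurd h hn.ne')

lemma exists_bound_of_isBigO_inv_log {f : ℕ → ℝ} {c : ℝ} (hc : 0 < c)
    (hf : f =O[atTop] fun n : ℕ => (log n)⁻¹) :
    ∃ M > (0 : ℝ), ∃ N : ℕ, ∀ n ≥ N, |f n| ≤ M * c / log n := by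
  obtain ⟨k, hk, hbound⟩ := hf.exists_pos
  refine ⟨k / c, by positivity, eventually_atTop.1 ?_⟩
  filter_upwards [hbound.bound,
    tendsto_log_natCast_atTop.eventually_gt_atTop 0] with n hn hlog
  rw [norm_eq_abs, norm_inv, norm_eq_abs, abs_of_pos hlog] at hn
  rwa [div_mul_cancel₀ k hc.ne', div_eq_mul_inv]

lemma isBigO_one_sub_pow_sub_gumbel {x : ℝ} {y ε r : ℕ → ℝ}
    (hy : ∀ᶠ n : ℕ in atTop, (n : ℝ) * y n = exp (-x + ε n)) (hε : ε =O[atTop] r)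
    (hε₀ : Tendsto ε atTop (𝓝 0)) (hr : (fun n : ℕ => (n : ℝ)⁻¹) =O[atTop] r) :
    (fun n => (1 - y n) ^ n - exp (-exp (-x))) =O[atTop] r := by
  have hny : Tendsto (fun n : ℕ => (n : ℝ) * y n) atTop (𝓝 (exp (-x))) := by
    refine Tendsto.congr' (hy.mono fun n hn => hn.symm) ?_
    simpa using (tendsto_const_nhds.add hε₀).rexp
  have hy₀ : Tendsto y atTop (𝓝 0) := by
    refine Tendsto.congr' ?_ (by simpa using hny.mul (tendsto_inv_atTop_nhds_zero_nat (𝕜 := ℝ)))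
    filter_upwards [eventually_ne_atTop 0] with n hn
    field_simp
  have hpoisson : (fun n => (1 - y n) ^ n - exp (-(n * y n))) =O[atTop]
      fun n : ℕ => (n : ℝ)⁻¹ := by
    have hsq : (fun n : ℕ => (n : ℝ) * y n ^ 2) =O[atTop] fun n : ℕ => (n : ℝ)⁻¹ := by
      refine ((hny.pow 2).isBigO_one ℝ |>.mul (isBigO_refl (fun n : ℕ => (n : ℝ)⁻¹) _)).congr' ?_
        (by simp)
      filter_upwards [eventually_ne_atTop 0] with n hn
      field_simp
    refine IsBigO.trans (IsBigO.of_bound' ?_) hsq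
    filter_upwards [hy, hy₀.eventually_le_const one_pos] with n hn hn₁
    have hy_nonneg : 0 ≤ y n :=
      (pos_of_mul_pos_right (hn ▸ exp_pos _) (Nat.cast_nonneg n)).le
    rw [norm_eq_abs, norm_eq_abs]
    exact (abs_one_sub_pow_sub_exp_le hy_nonneg hn₁ n).trans (le_abs_self _)
  have hlimit : (fun n => exp (-(n * y n)) - exp (-exp (-x))) =O[atTop] ε := by
    have hd : DifferentiableAt ℝ (fun s => exp (-exp (-x + s))) 0 := by fun_prop
    refine (hd.isBigO_sub.comp_tendsto hε₀).congr' ?_ (by simp [Function.comp_def])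
    filter_upwards [hy] with n hn
    simp [hn]
  exact ((hpoisson.trans hr).add (hlimit.trans hε)).congr_left fun n => by ring

noncomputable def weibullTail (K C α τ x : ℝ) : ℝ := K * x ^ α * exp (-C * x ^ τ)

lemma weibullTail_pos {K C α τ x : ℝ} (hK : 0 < K) (hx : 0 < x) : 0 < weibullTail K C α τ x := by
  unfold weibullTail; positivity

lemma weibullTail_mul_one_add {K C α τ b t : ℝ} (hb : 0 < b) (ht : 0 < 1 + t) :
    weibullTail K C α τ (b * (1 + t)) =
      weibullTail K C α τ b * exp (α * log (1 + t) - C * b ^ τ * ((1 + t) ^ τ - 1)) := by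
  simp only [weibullTail, mul_rpow hb.le ht.le, rpow_def_of_pos ht]
  rw [mul_assoc, mul_assoc, mul_assoc, ← exp_add, ← exp_add, mul_comm (log (1 + t))]
  ring_nf

lemma weibull_affine_eq_mul_one_add {C α τ b : ℝ} (hb : 0 < b) (x : ℝ) :
    1 / (C * τ * b ^ (τ - 1) - α / b) * x + b = b * (1 + x / (C * τ * b ^ τ - α)) := by
  rw [rpow_sub_one hb.ne', show C * τ * (b ^ τ / b) - α / b = (C * τ * b ^ τ - α) / b by ring]
  field_simp
  ring

lemma log_le_of_weibullTail_eq {K C α τ b : ℝ} {n : ℕ} (hKb : 1 ≤ K * b ^ α)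
    (h : weibullTail K C α τ b = 1 / n) : log n ≤ C * b ^ τ := by
  have hlog := congrArg log h
  rw [weibullTail, log_mul (by positivity) (exp_ne_zero _), log_exp, one_div, log_inv] at hlog
  linarith [log_nonneg hKb]

lemma isBigO_weibull_exponent_error {ι : Type*} {l : Filter ι} {β t : ι → ℝ}
    (ht : t =O[l] fun i => (β i)⁻¹) (ht₀ : Tendsto t l (𝓝 0)) (α C τ : ℝ) :
    (fun i => α * (log (1 + t i) - t i) - C * β i * ((1 + t i) ^ τ - 1 - τ * t i))
      =O[l] fun i => (β i)⁻¹ := by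
  have hlog : (fun s : ℝ => log (1 + s) - s) =O[𝓝 0] fun s => s := by
    have hd : DifferentiableAt ℝ (fun s : ℝ => log (1 + s) - s) 0 := by
      fun_prop (disch := norm_num)
    simpa using hd.isBigO_sub
  have hβt : (fun i => β i * t i) =O[l] fun _ => (1 : ℝ) :=
    ((isBigO_refl β l).mul ht).trans (IsBigO.of_bound 1 (.of_forall fun i => by
      by_cases h : β i = 0 <;> simp [h]))
  have hrpow : (fun i => β i * ((1 + t i) ^ τ - 1 - τ * t i)) =O[l] fun i => (β i)⁻¹ := by
    refine ((isBigO_refl β l).mul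
      ((one_add_rpow_sub_one_sub_mul_isBigO τ).comp_tendsto ht₀)).trans ?_
    simpa [pow_two, mul_assoc] using hβt.mul ht
  exact ((hlog.comp_tendsto ht₀).trans ht).const_mul_left α |>.sub (hrpow.const_mul_left C)
    |>.congr_left fun i => by simp only [Function.comp_apply]; ring

lemma isBigO_inv_rpow_inv_log {K C α τ : ℝ} {b : ℕ → ℝ} (hK : 0 < K) (hα : 0 < α)
    (hbtop : Tendsto b atTop atTop)
    (hb : ∀ᶠ n : ℕ in atTop, weibullTail K C α τ (b n) = 1 / n) :
    (fun n => (b n ^ τ)⁻¹) =O[atTop] fun n : ℕ => (log n)⁻¹ := by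
  have hKb : ∀ᶠ n in atTop, 1 ≤ K * b n ^ α :=
    (((tendsto_rpow_atTop hα).comp hbtop).const_mul_atTop hK).eventually_ge_atTop 1
  have hlog : ∀ᶠ n : ℕ in atTop, 0 < log n :=
    tendsto_log_natCast_atTop.eventually_gt_atTop 0
  refine IsBigO.inv_rev (IsBigO.of_bound C ?_) (hlog.mono fun n hn h => absurd h hn.ne')
  filter_upwards [hb, hKb, hlog, hbtop.eventually_gt_atTop 0] with n hbn hKbn hlogn hb₀
  rw [norm_eq_abs, norm_eq_abs, abs_of_pos hlogn, abs_of_pos (rpow_pos_of_pos hb₀ τ)]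
  exact log_le_of_weibullTail_eq hKbn hbn

lemma exists_natCast_mul_one_sub_eq_exp_neg_add {K C α τ x₁ : ℝ} {F : ℝ → ℝ} {a b : ℕ → ℝ}
    (hK : 0 < K) (hC : 0 < C) (hα : 0 < α) (hτ : 0 < τ)
    (hF : ∀ x ≥ x₁, F x = 1 - weibullTail K C α τ x) (hbtop : Tendsto b atTop atTop)
    (hb : ∀ᶠ n : ℕ in atTop, weibullTail K C α τ (b n) = 1 / n)
    (ha : ∀ n, a n = 1 / (C * τ * b n ^ (τ - 1) - α / b n)) (x : ℝ) :
    ∃ ε : ℕ → ℝ, (∀ᶠ n : ℕ in atTop, (n : ℝ) * (1 - F (a n * x + b n)) = exp (-x + ε n)) ∧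
      ε =O[atTop] fun n : ℕ => (log n)⁻¹ := by
  set β : ℕ → ℝ := fun n => b n ^ τ
  set t : ℕ → ℝ := fun n => x / (C * τ * β n - α)
  have hCτ : 0 < C * τ := by positivity
  have hβ : Tendsto β atTop atTop := (tendsto_rpow_atTop hτ).comp hbtop
  have ht : t =O[atTop] fun n => (β n)⁻¹ := isBigO_div_const_mul_sub hCτ hβ x α
  have ht₀ : Tendsto t atTop (𝓝 0) := ht.trans_tendsto (tendsto_inv_atTop_zero.comp hβ)
  refine ⟨fun n => α * (log (1 + t n) - t n) - C * β n * ((1 + t n) ^ τ - 1 - τ * t n), ?_,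
    (isBigO_weibull_exponent_error ht ht₀ α C τ).trans (isBigO_inv_rpow_inv_log hK hα hbtop hb)⟩
  have hu : Tendsto (fun n => b n * (1 + t n)) atTop atTop :=
    hbtop.atTop_mul_pos one_pos (by simpa using ht₀.const_add 1)
  filter_upwards [hb, hbtop.eventually_gt_atTop 0, hu.eventually_ge_atTop x₁,
    ht₀.eventually (lt_mem_nhds (show (-1 : ℝ) < 0 by norm_num)),
    hβ.eventually_gt_atTop (α / (C * τ)), eventually_ne_atTop 0] with n hbn hb₀ hux₁ ht₁ hβn hn
  have htD : t n * (C * τ * β n - α) = x :=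
    div_mul_cancel₀ x (sub_ne_zero.2 ((div_lt_iff₀' hCτ).1 hβn).ne')
  rw [ha, weibull_affine_eq_mul_one_add hb₀, hF _ hux₁, sub_sub_cancel,
    weibullTail_mul_one_add hb₀ (by linarith), hbn, ← mul_assoc,
    mul_one_div_cancel (Nat.cast_ne_zero.2 hn), one_mul]
  congr 1
  linear_combination -htD

theorem stmt_1_general (K C α τ x₁ : ℝ) (hK : 0 < K) (hC : 0 < C) (hα : 0 < α) (hτ : 1 ≤ τ)
    (hx₁ : 0 < x₁)
    (hanti : StrictAntiOn (fun x : ℝ => K * x ^ α * Real.exp (-C * x ^ τ)) (Set.Ici x₁))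
    (F : ℝ → ℝ) (hF : ∀ x ≥ x₁, F x = 1 - K * x ^ α * Real.exp (-C * x ^ τ))
    (b : ℕ → ℝ)
    (hb : ∀ᶠ n : ℕ in atTop,
      x₁ ≤ b n ∧ K * b n ^ α * Real.exp (-C * b n ^ τ) = 1 / (n : ℝ))
    (a : ℕ → ℝ) (ha : ∀ n, a n = 1 / (C * τ * b n ^ (τ - 1) - α / b n)) :
    ∀ x : ℝ, ∃ M > (0 : ℝ), ∃ N : ℕ, ∀ n ≥ N,
      |F (a n * x + b n) ^ n - Real.exp (-Real.exp (-x))|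
        ≤ M * Real.exp (-Real.exp (-x)) / Real.log n := by
  intro x
  have hbtop : Tendsto b atTop atTop :=
    tendsto_atTop_of_antitoneOn_of_tendsto_zero hanti.antitoneOn
      (fun y hy => weibullTail_pos hK (hx₁.trans_le hy)) (hb.mono fun n h => h.1)
      (tendsto_one_div_atTop_nhds_zero_nat.congr' (hb.mono fun n h => h.2.symm))
  obtain ⟨ε, hy, hε⟩ := exists_natCast_mul_one_sub_eq_exp_neg_add hK hC hα (by linarith) hF
    hbtop (hb.mono fun n h => h.2) ha x
  have hlog : Tendsto (fun n : ℕ => (log n)⁻¹) atTop (𝓝 0) :=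
    tendsto_log_natCast_atTop.inv_tendsto_atTop
  have key := isBigO_one_sub_pow_sub_gumbel hy hε (hε.trans_tendsto hlog)
    isBigO_inv_natCast_inv_log
  simpa only [sub_sub_cancel] using exists_bound_of_isBigO_inv_log (exp_pos _) key

/-- Theorem 1.1: for a generalized Weibull distribution `F(x) = 1 - K x^α exp(-C x^τ)`
(for `x ≥ x₁`), with centering `b_n` solving `K b^α exp(-C b^τ) = 1/n` and scaling
`a_n = 1/(C τ b_n^{τ-1} - α/b_n)`, one has
`F(a_n x + b_n)^n = Λ(x)(1 + O(1/log n))`, where `Λ(x) = exp(-e^{-x})` is the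
Gumbel distribution function. -/
theorem stmt_1 (K C α τ x₁ : ℝ) (hK : 0 < K) (hC : 0 < C) (hα : 0 < α) (hτ : 1 ≤ τ)
    (hx₁ : 0 < x₁)
    (hanti : StrictAntiOn (fun x : ℝ => K * x ^ α * Real.exp (-C * x ^ τ)) (Set.Ici x₁))
    (hlim : Tendsto (fun x : ℝ => K * x ^ α * Real.exp (-C * x ^ τ)) atTop (nhds 0))
    (hrange : ∀ x ≥ x₁, K * x ^ α * Real.exp (-C * x ^ τ) ∈ Set.Ioc (0 : ℝ) 1)
    (F : ℝ → ℝ) (hF : ∀ x ≥ x₁, F x = 1 - K * x ^ α * Real.exp (-C * x ^ τ))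
    (b : ℕ → ℝ)
    (hb : ∀ᶠ n : ℕ in atTop,
      x₁ ≤ b n ∧ K * b n ^ α * Real.exp (-C * b n ^ τ) = 1 / (n : ℝ))
    (a : ℕ → ℝ) (ha : ∀ n, a n = 1 / (C * τ * b n ^ (τ - 1) - α / b n)) :
    ∀ x : ℝ, ∃ M > (0 : ℝ), ∃ N : ℕ, ∀ n ≥ N,
      |F (a n * x + b n) ^ n - Real.exp (-Real.exp (-x))|
        ≤ M * Real.exp (-Real.exp (-x)) / Real.log n :=
  stmt_1_general K C α τ x₁ hK hC hα hτ hx₁ hanti F hF b hb a ha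
end

section
/- Assume τ = 1. Then for every x ∈ ℝ there exist a constant M > 0 and an index N such that for all n ≥ N, |F(a_n x + b_n)^n − Λ(x)| ≤ M / b_n². (In other words, for τ = 1 the first-order error term of order 1/b_n vanishes for the canonical constants a_n.) -/
open Filter Set


/-- Quadratic log bound. -/
lemma aux_log_bound {u : ℝ} (hu : |u| ≤ 1/2) : |Real.log (1+u) - u| ≤ 2 * u^2 := by
  have h1 : |(-u : ℝ)| < 1 := by rw [abs_neg]; linarith [abs_nonneg u]
  have h := Real.abs_log_sub_add_sum_range_le h1 1
  simp only [Finset.sum_range_one, pow_one, Nat.cast_zero, zero_add, div_one, abs_neg,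
    sub_neg_eq_add] at h
  have h3 : |Real.log (1+u) - u| = |(-u) + Real.log (1+u)| := by
    rw [abs_sub_comm, ← abs_neg]; congr 1; ring
  have h4 : |u| ^ (1+1) / (1 - |u|) ≤ 2 * u^2 := by
    have h5 : (1:ℝ)/2 ≤ 1 - |u| := by linarith
    have h6 : |u|^(1+1) = u^2 := by norm_num [sq_abs]
    rw [div_le_iff₀ (by linarith : (0:ℝ) < 1 - |u|), h6]
    nlinarith [sq_nonneg u]
  calc |Real.log (1+u) - u| = |(-u) + Real.log (1 + u)| := h3
    _ ≤ |u|^(1+1) / (1 - |u|) := h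
    _ ≤ 2 * u^2 := h4

/-- exp(-t) ≤ 1 - t + t² for t ≥ 0. -/
lemma aux_exp_quad {t : ℝ} (ht : 0 ≤ t) : Real.exp (-t) - (1 - t) ≤ t^2 := by
  have h1 : Real.exp (-t) * Real.exp t = 1 := by rw [← Real.exp_add]; simp
  have h2 : 1 + t ≤ Real.exp t := by linarith [Real.add_one_le_exp t]
  have h3 : 0 < Real.exp (-t) := Real.exp_pos _
  nlinarith [mul_le_mul_of_nonneg_left h2 h3.le]

/-- 1-Lipschitz estimate for exp on nonpositive arguments. -/
lemma aux_exp_lip {s t : ℝ} (hs : 0 ≤ s) (ht : 0 ≤ t) :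
    |Real.exp (-s) - Real.exp (-t)| ≤ |s - t| := by
  have key : ∀ p q : ℝ, 0 ≤ p → p ≤ q → Real.exp (-p) - Real.exp (-q) ≤ q - p := by
    intro p q hp hpq
    have h1 : Real.exp (-p) * Real.exp (p - q) = Real.exp (-q) := by
      rw [← Real.exp_add]; ring_nf
    have h2 : 1 + (p - q) ≤ Real.exp (p - q) := by linarith [Real.add_one_le_exp (p - q)]
    have h3 : 0 < Real.exp (-p) := Real.exp_pos _
    have h4 : Real.exp (-p) ≤ 1 := Real.exp_le_one_iff.mpr (by linarith)
    nlinarith [mul_le_mul_of_nonneg_left h2 h3.le]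
  rcases le_total s t with h | h
  · rw [abs_sub_comm s t, abs_of_nonneg (by linarith : (0:ℝ) ≤ t - s),
      abs_of_nonneg (by
        have := Real.exp_le_exp.mpr (by linarith : -t ≤ -s); linarith)]
    exact key s t hs h
  · rw [abs_of_nonneg (by linarith : (0:ℝ) ≤ s - t),
      abs_of_nonpos (by
        have := Real.exp_le_exp.mpr (by linarith : -s ≤ -t); linarith)]
    have := key t s ht h
    linarith

lemma aux_pow_gap (a b : ℝ) (hb : 0 ≤ b) (hba : b ≤ a) (ha : a ≤ 1) :
    ∀ n : ℕ, a^n - b^n ≤ n * (a - b) := by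
  intro n
  induction n with
  | zero => simp
  | succ k ih =>
    have hk : b^k ≤ a^k := pow_le_pow_left₀ hb hba k
    have hak : a^k ≤ 1 := pow_le_one₀ (hb.trans hba) ha
    have hbk : 0 ≤ b^k := pow_nonneg hb k
    have ha0 : 0 ≤ a := hb.trans hba
    have : a^(k+1) - b^(k+1) = a*(a^k - b^k) + b^k*(a-b) := by ring
    push_cast
    nlinarith [ih, mul_le_mul_of_nonneg_left ih ha0]

lemma aux_pow_exp {n : ℕ} (hn : 1 ≤ n) {c : ℝ} (hc : 0 ≤ c) (hcn : c ≤ (n:ℝ)) :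
    |(1 - c/(n:ℝ))^n - Real.exp (-c)| ≤ c^2 / (n:ℝ) := by
  have hn0 : (0:ℝ) < n := by exact_mod_cast hn
  have hb0 : 0 ≤ 1 - c/(n:ℝ) := by
    rw [sub_nonneg, div_le_one hn0]; exact hcn
  have hle : 1 - c/(n:ℝ) ≤ Real.exp (-(c/(n:ℝ))) := by
    linarith [Real.add_one_le_exp (-(c/(n:ℝ)))]
  have ha1 : Real.exp (-(c/(n:ℝ))) ≤ 1 := Real.exp_le_one_iff.mpr (neg_nonpos.mpr (by positivity))
  have hexp : Real.exp (-(c/(n:ℝ)))^n = Real.exp (-c) := by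
    rw [← Real.exp_nat_mul]; congr 1; field_simp
  have hpow_le : (1 - c/(n:ℝ))^n ≤ Real.exp (-c) := by
    rw [← hexp]; exact pow_le_pow_left₀ hb0 hle n
  have hgap : Real.exp (-c) - (1 - c/(n:ℝ))^n ≤ c^2 / (n:ℝ) := by
    have h2 := aux_pow_gap _ _ hb0 hle ha1 n
    rw [hexp] at h2
    have h1 : Real.exp (-(c/(n:ℝ))) - (1 - c/(n:ℝ)) ≤ (c/(n:ℝ))^2 :=
      aux_exp_quad (by positivity)
    have h3 : (n:ℝ) * (c/(n:ℝ))^2 = c^2/(n:ℝ) := by field_simp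
    calc Real.exp (-c) - (1 - c/(n:ℝ))^n
        ≤ (n:ℝ) * (Real.exp (-(c/(n:ℝ))) - (1 - c/(n:ℝ))) := h2
      _ ≤ (n:ℝ) * (c/(n:ℝ))^2 := by
          exact mul_le_mul_of_nonneg_left h1 hn0.le
      _ = c^2/(n:ℝ) := h3
  rw [abs_sub_comm, abs_of_nonneg (by linarith)]
  exact hgap

set_option maxHeartbeats 1000000 in
/-- Theorem 1.3, consequence for `τ = 1`: for the canonical constants
`a_n = 1/(C - α/b_n)` the first-order error of order `1/b_n` vanishes, i.e.
`F(a_n x + b_n)^n = Λ(x) + O(1/b_n²)`. -/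
theorem stmt_4 (K C α x₁ : ℝ) (hK : 0 < K) (hC : 0 < C) (hα : 0 < α)
    (hx₁ : 0 < x₁)
    (hanti : StrictAntiOn (fun x : ℝ => K * x ^ α * Real.exp (-C * x)) (Set.Ici x₁))
    (hlim : Tendsto (fun x : ℝ => K * x ^ α * Real.exp (-C * x)) atTop (nhds 0))
    (hrange : ∀ x ≥ x₁, K * x ^ α * Real.exp (-C * x) ∈ Set.Ioc (0 : ℝ) 1)
    (F : ℝ → ℝ) (hF : ∀ x ≥ x₁, F x = 1 - K * x ^ α * Real.exp (-C * x))
    (b : ℕ → ℝ)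
    (hb : ∀ᶠ n : ℕ in atTop,
      x₁ ≤ b n ∧ K * b n ^ α * Real.exp (-C * b n) = 1 / (n : ℝ))
    (a : ℕ → ℝ) (ha : ∀ n, a n = 1 / (C - α / b n)) :
    ∀ x : ℝ, ∃ M > (0 : ℝ), ∃ N : ℕ, ∀ n ≥ N,
      |F (a n * x + b n) ^ n - Real.exp (-Real.exp (-x))| ≤ M / b n ^ 2 := by
  intro x
  set A : ℝ := 2 * |x| / C with hA
  have hA0 : 0 ≤ A := by positivity
  set c₁ : ℝ := 2 * α * A ^ 2 with hc₁
  have hc₁0 : 0 ≤ c₁ := by positivity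
  set c₂ : ℝ := Real.exp (1 - x) with hc₂
  have hc₂0 : 0 < c₂ := Real.exp_pos _
  refine ⟨c₂^2 + 2 * Real.exp (-x) * c₁ + 1, by positivity, ?_⟩
  -- a threshold beyond which K y^(α+2) e^{-Cy} ≤ 1
  obtain ⟨B₂, hB₂⟩ : ∃ B₂ : ℝ, ∀ y ≥ B₂, K * (y ^ (α + 2) * Real.exp (-C * y)) ≤ 1 := by
    have h := (tendsto_rpow_mul_exp_neg_mul_atTop_nhds_zero (α+2) C hC).const_mul K
    have h2 : ∀ᶠ y : ℝ in atTop, K * (y ^ (α+2) * Real.exp (-C * y)) < 1 :=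
      h.eventually_lt_const (by norm_num)
    obtain ⟨B₂, hB₂⟩ := eventually_atTop.mp h2
    exact ⟨B₂, fun y hy => (hB₂ y hy).le⟩
  set B : ℝ := max (max (max x₁ (2*α/C)) (max (2*A) (2*x₁))) (max (c₁ + 1) B₂) with hBdef
  have hBx₁ : x₁ ≤ B := le_max_of_le_left (le_max_of_le_left (le_max_left _ _))
  have hBαC : 2*α/C ≤ B := le_max_of_le_left (le_max_of_le_left (le_max_right _ _))
  have hBA : 2*A ≤ B := le_max_of_le_left (le_max_of_le_right (le_max_left _ _))
  have hB2x₁ : 2*x₁ ≤ B := le_max_of_le_left (le_max_of_le_right (le_max_right _ _))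
  have hBc₁ : c₁ + 1 ≤ B := le_max_of_le_right (le_max_left _ _)
  have hBB₂ : B₂ ≤ B := le_max_of_le_right (le_max_right _ _)
  have hgB : 0 < K * B ^ α * Real.exp (-C * B) := (hrange B hBx₁).1
  have ev : ∀ᶠ n : ℕ in atTop,
      (x₁ ≤ b n ∧ K * b n ^ α * Real.exp (-C * b n) = 1 / (n:ℝ)) ∧
      (1 ≤ n ∧ c₂ ≤ (n:ℝ)) ∧ 1 / (n:ℝ) < K * B ^ α * Real.exp (-C * B) := by
    filter_upwards [hb, eventually_ge_atTop 1,
      tendsto_natCast_atTop_atTop.eventually_ge_atTop c₂,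
      tendsto_natCast_atTop_atTop.eventually_gt_atTop
        (1 / (K * B ^ α * Real.exp (-C * B)))] with n h1 h2 h3 h4
    refine ⟨h1, ⟨h2, h3⟩, ?_⟩
    have hn0 : (0:ℝ) < n := lt_of_le_of_lt (by positivity) h4
    rw [div_lt_iff₀ hn0, mul_comm]
    have h5 := mul_lt_mul_of_pos_right h4 hgB
    rw [div_mul_cancel₀ 1 hgB.ne'] at h5
    exact h5
  obtain ⟨N, hN⟩ := eventually_atTop.mp ev
  refine ⟨N, fun n hn => ?_⟩
  obtain ⟨⟨hbx, hgb⟩, ⟨hn1, hnc⟩, hltB⟩ := hN n hn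
  -- b n ≥ B
  have hBb : B ≤ b n := by
    by_contra hcon
    push_neg at hcon
    have := hanti hbx hBx₁ hcon
    simp only at this
    rw [hgb] at this
    linarith
  set β : ℝ := b n with hβ
  have hβ1 : 1 ≤ β := by linarith
  have hβ0 : (0:ℝ) < β := by linarith
  have hn0 : (0:ℝ) < n := by
    have : 0 < n := hn1
    exact_mod_cast this
  -- denominator
  have hαβ : α / β ≤ C / 2 := by
    rw [div_le_div_iff₀ hβ0 (by norm_num : (0:ℝ) < 2)]
    have h := (div_le_iff₀ hC).mp (le_trans hBαC hBb)
    linarith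
  have hdenpos : 0 < C - α / β := by linarith
  have hapos : 0 < a n := by rw [ha n]; positivity
  have haub : a n ≤ 2 / C := by
    rw [ha n]
    rw [div_le_div_iff₀ hdenpos hC]
    have : 0 < α / β := by positivity
    linarith
  have hax : |a n * x| ≤ A := by
    rw [abs_mul, abs_of_pos hapos, hA]
    calc a n * |x| ≤ (2/C) * |x| := mul_le_mul_of_nonneg_right haub (abs_nonneg x)
      _ = 2 * |x| / C := by ring
  set u : ℝ := a n * x / β with hu
  have huA : |u| ≤ A / β := by
    rw [hu, abs_div, abs_of_pos hβ0]
    gcongr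
  have huh : |u| ≤ 1/2 := by
    refine huA.trans ?_
    rw [div_le_iff₀ hβ0]
    linarith
  have h1u : (0:ℝ) < 1 + u := by
    have := abs_le.mp huh
    linarith [this.1]
  have hβu : β * u = a n * x := by
    rw [hu]; field_simp
  have hy : x₁ ≤ a n * x + β := by
    have h1 := (abs_le.mp hax).1
    have hAβ : A ≤ β / 2 := by linarith
    linarith
  have hsplit : a n * x + β = β * (1 + u) := by
    rw [mul_add, mul_one, hβu]; ring
  set r : ℝ := (1+u)^α * Real.exp (-(C * (a n * x))) with hr
  have hrpos : 0 < r := by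
    rw [hr]
    positivity
  have hgy : K * (a n * x + β) ^ α * Real.exp (-C * (a n * x + β)) = (1/(n:ℝ)) * r := by
    rw [hsplit, Real.mul_rpow hβ0.le h1u.le]
    rw [show -C * (β * (1+u)) = -C * β + -(C * (a n * x)) by rw [← hβu]; ring, Real.exp_add]
    rw [← hgb, hr]
    ring
  -- r = exp(-x + δ)
  have hone : a n * (C - α / β) = 1 := by
    rw [ha n, hβ]
    rw [← hβ]
    exact one_div_mul_cancel hdenpos.ne'
  have hid : α * u - C * (a n * x) = -x := by
    have hux : α * u = a n * x * (α / β) := by rw [hu]; ring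
    have h9 : a n * x * (α/β) - C * (a n * x) = -(x * (a n * (C - α/β))) := by ring
    rw [hux, h9, hone, mul_one]
  set δ : ℝ := α * (Real.log (1+u) - u) with hδ
  have hr_exp : r = Real.exp (-x + δ) := by
    rw [hr, ← Real.exp_log (Real.rpow_pos_of_pos h1u α), ← Real.exp_add, Real.log_rpow h1u]
    congr 1
    rw [hδ]
    linarith [hid]
  have hδb : |δ| ≤ c₁ / β^2 := by
    have h2 := aux_log_bound huh
    have hu2 : u^2 ≤ A^2 / β^2 := by
      have := sq_abs u
      have h3 : |u|^2 ≤ (A/β)^2 := pow_le_pow_left₀ (abs_nonneg u) huA 2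
      rw [div_pow] at h3
      linarith [sq_abs u]
    calc |δ| = α * |Real.log (1+u) - u| := by
          rw [hδ, abs_mul, abs_of_pos hα]
      _ ≤ α * (2 * u^2) := mul_le_mul_of_nonneg_left h2 hα.le
      _ ≤ α * (2 * (A^2/β^2)) := by
          have := hu2
          gcongr
      _ = c₁ / β^2 := by rw [hc₁]; ring
  have hβc : c₁ ≤ β^2 := by
    have hself : β ≤ β^2 := le_self_pow₀ hβ1 two_ne_zero
    linarith
  have hδ1 : |δ| ≤ 1 := by
    refine hδb.trans ?_
    rw [div_le_one (by positivity)]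
    exact hβc
  have hrc₂ : r ≤ c₂ := by
    rw [hr_exp, hc₂]
    exact Real.exp_le_exp.mpr (by linarith [(abs_le.mp hδ1).2])
  have hrx : |r - Real.exp (-x)| ≤ 2 * Real.exp (-x) * (c₁/β^2) := by
    have h1 : r - Real.exp (-x) = Real.exp (-x) * (Real.exp δ - 1) := by
      rw [hr_exp, Real.exp_add]; ring
    rw [h1, abs_mul, abs_of_pos (Real.exp_pos _)]
    calc Real.exp (-x) * |Real.exp δ - 1| ≤ Real.exp (-x) * (2 * |δ|) :=
          mul_le_mul_of_nonneg_left (Real.abs_exp_sub_one_le hδ1) (Real.exp_pos _).le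
      _ ≤ Real.exp (-x) * (2 * (c₁/β^2)) := by
          have := hδb
          gcongr
      _ = 2 * Real.exp (-x) * (c₁/β^2) := by ring
  have hFy : F (a n * x + β) = 1 - r/(n:ℝ) := by
    rw [hF _ hy, hgy]
    ring
  have hrn : r ≤ (n:ℝ) := hrc₂.trans hnc
  have happrox := aux_pow_exp hn1 hrpos.le hrn
  have hlip := aux_exp_lip hrpos.le (Real.exp_pos (-x)).le
  -- 1/n ≤ 1/β²
  have h1n : 1/(n:ℝ) ≤ 1/β^2 := by
    have h2 := hB₂ β (le_trans hBB₂ hBb)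
    have e3 : β ^ (α+2) = β^α * β^2 := by
      rw [Real.rpow_add hβ0]
      congr 1
      rw [show ((2:ℝ)) = ((2:ℕ):ℝ) by norm_num, Real.rpow_natCast]
    have e4 : K * (β^α * β^2 * Real.exp (-C*β)) = K*β^α*Real.exp (-C*β)*β^2 := by ring
    rw [e3, e4] at h2
    rw [← hgb, le_div_iff₀ (by positivity : (0:ℝ) < β^2)]
    exact h2
  have hβ2pos : (0:ℝ) < β^2 := by positivity
  calc |F (a n * x + β) ^ n - Real.exp (-Real.exp (-x))|
      = |(1 - r/(n:ℝ))^n - Real.exp (-Real.exp (-x))| := by rw [hFy]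
    _ ≤ |(1 - r/(n:ℝ))^n - Real.exp (-r)| + |Real.exp (-r) - Real.exp (-Real.exp (-x))| := by
        exact abs_sub_le _ _ _
    _ ≤ r^2/(n:ℝ) + |r - Real.exp (-x)| := add_le_add happrox hlip
    _ ≤ c₂^2 * (1/(n:ℝ)) + 2 * Real.exp (-x) * (c₁/β^2) := by
        refine add_le_add ?_ hrx
        have : r^2 ≤ c₂^2 := pow_le_pow_left₀ hrpos.le hrc₂ 2
        rw [div_eq_mul_one_div]
        exact mul_le_mul_of_nonneg_right this (by positivity)
    _ ≤ c₂^2 * (1/β^2) + 2 * Real.exp (-x) * (c₁/β^2) := by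
        refine add_le_add (mul_le_mul_of_nonneg_left h1n (by positivity)) le_rfl
    _ ≤ (c₂^2 + 2 * Real.exp (-x) * c₁ + 1) / β^2 := by
        have e : c₂^2 * (1/β^2) + 2 * Real.exp (-x) * (c₁/β^2)
            = (c₂^2 + 2 * Real.exp (-x) * c₁)/β^2 := by ring
        rw [e]
        gcongr ?_ / β^2
        linarith
end

section
/- There exist a constant M > 0 and an index N such that for all n ≥ N, |a_n − 1/(C τ b_n^{τ−1}) − α/(C² τ² b_n^{2τ−1})| ≤ M / b_n^{3τ−1}. That is, a_n = 1/(C τ b_n^{τ−1}) + α/(C² τ² b_n^{2τ−1}) + O(1/b_n^{3τ−1}). -/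
open Filter Set

/-- Remark (i): the canonical scaling constants satisfy
`a_n = 1/(C τ b_n^{τ-1}) + α/(C² τ² b_n^{2τ-1}) + O(1/b_n^{3τ-1})`. -/
theorem stmt_5 (K C α τ x₁ : ℝ) (hK : 0 < K) (hC : 0 < C) (hα : 0 < α) (hτ : 1 ≤ τ)
    (hx₁ : 0 < x₁)
    (hanti : StrictAntiOn (fun x : ℝ => K * x ^ α * Real.exp (-C * x ^ τ)) (Set.Ici x₁))
    (hlim : Tendsto (fun x : ℝ => K * x ^ α * Real.exp (-C * x ^ τ)) atTop (nhds 0))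
    (hrange : ∀ x ≥ x₁, K * x ^ α * Real.exp (-C * x ^ τ) ∈ Set.Ioc (0 : ℝ) 1)
    (b : ℕ → ℝ)
    (hb : ∀ᶠ n : ℕ in atTop,
      x₁ ≤ b n ∧ K * b n ^ α * Real.exp (-C * b n ^ τ) = 1 / (n : ℝ))
    (a : ℕ → ℝ) (ha : ∀ n, a n = 1 / (C * τ * b n ^ (τ - 1) - α / b n)) :
    ∃ M > (0 : ℝ), ∃ N : ℕ, ∀ n ≥ N,
      |a n - 1 / (C * τ * b n ^ (τ - 1)) - α / (C ^ 2 * τ ^ 2 * b n ^ (2 * τ - 1))|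
        ≤ M / b n ^ (3 * τ - 1) := by
  set R : ℝ := max x₁ (max 1 (2 * α / (C * τ))) with hR
  have hRx : x₁ ≤ R := le_max_left _ _
  have hCτ : 0 < C * τ := mul_pos hC (lt_of_lt_of_le one_pos hτ)
  have hfR : 0 < K * R ^ α * Real.exp (-C * R ^ τ) := (hrange R hRx).1
  have h1 : ∀ᶠ n : ℕ in atTop, 1 / (n : ℝ) < K * R ^ α * Real.exp (-C * R ^ τ) :=
    tendsto_one_div_atTop_nhds_zero_nat.eventually (gt_mem_nhds hfR)
  have hbig : ∀ᶠ n : ℕ in atTop, R ≤ b n := by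
    filter_upwards [hb, h1] with n ⟨hbx, hbeq⟩ hlt
    by_contra hcon
    push_neg at hcon
    have := hanti (mem_Ici.2 hbx) (mem_Ici.2 hRx) hcon
    simp only at this
    rw [hbeq] at this
    linarith
  obtain ⟨N, hN⟩ := eventually_atTop.mp (hb.and hbig)
  refine ⟨2 * α ^ 2 / (C ^ 3 * τ ^ 3), by positivity, N, fun n hn => ?_⟩
  obtain ⟨⟨hbx, _⟩, hbR⟩ := hN n hn
  set t := b n with ht
  have hb0 : 0 < t := lt_of_lt_of_le hx₁ hbx
  have hb1 : 1 ≤ t := le_trans (le_trans (le_max_left _ _) (le_max_right _ _)) hbR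
  have hbα : 2 * α / (C * τ) ≤ t := le_trans (le_trans (le_max_right _ _) (le_max_right _ _)) hbR
  set B : ℝ := t ^ (τ - 1) with hB
  have hB0 : 0 < B := Real.rpow_pos_of_pos hb0 _
  set u : ℝ := C * τ * B with hu
  set v : ℝ := α / t with hv
  have hu0 : 0 < u := mul_pos hCτ hB0
  have hv0 : 0 < v := div_pos hα hb0
  -- 2*v ≤ u
  have htτ : t ≤ t ^ τ := by
    calc t = t ^ (1:ℝ) := (Real.rpow_one t).symm
    _ ≤ t ^ τ := Real.rpow_le_rpow_of_exponent_le hb1 hτ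
  have htτ' : t ^ τ = B * t := by
    rw [hB, ← Real.rpow_add_one (ne_of_gt hb0) (τ - 1)]
    ring_nf
  have h2v : 2 * v ≤ u := by
    have h2α : 2 * α ≤ C * τ * t := (div_le_iff₀ hCτ).mp hbα |>.trans_eq (by ring)
    have : 2 * α ≤ C * τ * (t ^ τ) := le_trans h2α (by nlinarith)
    rw [htτ'] at this
    rw [hv, hu, ← mul_div_assoc, div_le_iff₀ hb0]
    nlinarith
  have huv : 0 < u - v := by linarith
  have hhalf : u / 2 ≤ u - v := by linarith
  -- rewrite goal pieces
  have e2 : t ^ (2 * τ - 1) = B * B * t := by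
    rw [show 2 * τ - 1 = (τ - 1) + ((τ - 1) + 1) by ring, Real.rpow_add hb0, Real.rpow_add hb0,
      Real.rpow_one, hB]; ring
  have e3 : t ^ (3 * τ - 1) = B * B * B * (t * t) := by
    rw [show 3 * τ - 1 = (τ - 1) + ((τ - 1) + ((τ - 1) + (1 + 1))) by ring, Real.rpow_add hb0,
      Real.rpow_add hb0, Real.rpow_add hb0, Real.rpow_add hb0, Real.rpow_one, hB]; ring
  have emid : α / (C ^ 2 * τ ^ 2 * t ^ (2 * τ - 1)) = v / u ^ 2 := by
    rw [e2, hu, hv]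
    field_simp
  rw [ha, emid, e3]
  have key : 1 / (u - v) - 1 / u - v / u ^ 2 = v ^ 2 / (u ^ 2 * (u - v)) := by
    field_simp
    ring
  rw [key, abs_of_pos (by positivity)]
  have step1 : v ^ 2 / (u ^ 2 * (u - v)) ≤ v ^ 2 / (u ^ 2 * (u / 2)) := by
    gcongr
  refine step1.trans (le_of_eq ?_)
  rw [hu, hv]
  field_simp
end

section
/- If (b̃_n) is a sequence of positive reals with lim_n (b_n − b̃_n)/a_n = 0, then lim_n (b_n^τ − b̃_n^τ) = 0. -/
open Filter Set

lemma aux_rpow_mvt {τ : ℝ} (hτ : 1 ≤ τ) {x y : ℝ} (hy : 0 < y) (hyx : y < x) :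
    x ^ τ - y ^ τ ≤ τ * x ^ (τ - 1) * (x - y) := by
  obtain ⟨c, hc, hc'⟩ := exists_hasDerivAt_eq_slope (fun z : ℝ => z ^ τ)
    (fun z => τ * z ^ (τ - 1)) hyx
    (fun z hz => (Real.continuousAt_rpow_const z τ
      (Or.inl (ne_of_gt (lt_of_lt_of_le hy hz.1)))).continuousWithinAt)
    (fun z _ => Real.hasDerivAt_rpow_const (Or.inr hτ))
  have hxy : 0 < x - y := sub_pos.2 hyx
  have : x ^ τ - y ^ τ = τ * c ^ (τ - 1) * (x - y) := by
    field_simp at hc' ⊢; linarith [hc']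
  rw [this]
  have hcpos : 0 < c := lt_trans hy hc.1
  have h1 : c ^ (τ - 1) ≤ x ^ (τ - 1) :=
    Real.rpow_le_rpow hcpos.le hc.2.le (by linarith)
  exact mul_le_mul_of_nonneg_right
    (mul_le_mul_of_nonneg_left h1 (by linarith)) hxy.le

lemma aux_rpow_abs {τ : ℝ} (hτ : 1 ≤ τ) {x y : ℝ} (hx : 0 < x) (hy : 0 < y) :
    |x ^ τ - y ^ τ| ≤ τ * (max x y) ^ (τ - 1) * |x - y| := by
  rcases lt_trichotomy y x with h | h | h
  · rw [abs_of_nonneg (sub_nonneg.2 (Real.rpow_le_rpow hy.le h.le (by linarith))),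
      abs_of_nonneg (sub_nonneg.2 h.le), max_eq_left h.le]
    exact aux_rpow_mvt hτ hy h
  · simp [h]
  · rw [abs_sub_comm (x^τ), abs_sub_comm x,
      abs_of_nonneg (sub_nonneg.2 (Real.rpow_le_rpow hx.le h.le (by linarith))),
      abs_of_nonneg (sub_nonneg.2 h.le), max_eq_right h.le]
    exact aux_rpow_mvt hτ hx h

/-- Remark (ii): if `b̃_n > 0` satisfies `(b_n - b̃_n)/a_n → 0`, then
`b_n^τ - b̃_n^τ → 0`. -/
theorem stmt_6 (K C α τ x₁ : ℝ) (hK : 0 < K) (hC : 0 < C) (hα : 0 < α) (hτ : 1 ≤ τ)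
    (hx₁ : 0 < x₁)
    (hanti : StrictAntiOn (fun x : ℝ => K * x ^ α * Real.exp (-C * x ^ τ)) (Set.Ici x₁))
    (hlim : Tendsto (fun x : ℝ => K * x ^ α * Real.exp (-C * x ^ τ)) atTop (nhds 0))
    (hrange : ∀ x ≥ x₁, K * x ^ α * Real.exp (-C * x ^ τ) ∈ Set.Ioc (0 : ℝ) 1)
    (b : ℕ → ℝ)
    (hb : ∀ᶠ n : ℕ in atTop,
      x₁ ≤ b n ∧ K * b n ^ α * Real.exp (-C * b n ^ τ) = 1 / (n : ℝ))
    (a : ℕ → ℝ) (ha : ∀ n, a n = 1 / (C * τ * b n ^ (τ - 1) - α / b n))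
    (bt : ℕ → ℝ) (hbt : ∀ n, 0 < bt n)
    (hbtlim : Tendsto (fun n => (b n - bt n) / a n) atTop (nhds 0)) :
    Tendsto (fun n => b n ^ τ - bt n ^ τ) atTop (nhds 0) := by
  have hτ1 : (0:ℝ) ≤ τ - 1 := by linarith
  have hCτ : 0 < C * τ := by positivity
  -- Step 1 : b n → ∞
  have hbtop : Tendsto b atTop atTop := by
    rw [tendsto_atTop]
    intro M
    have hM' : x₁ ≤ max M x₁ := le_max_right _ _
    have hfpos : 0 < K * (max M x₁) ^ α * Real.exp (-C * (max M x₁) ^ τ) :=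
      (hrange _ hM').1
    have h1 : ∀ᶠ n : ℕ in atTop,
        1 / (n:ℝ) < K * (max M x₁) ^ α * Real.exp (-C * (max M x₁) ^ τ) :=
      tendsto_one_div_atTop_nhds_zero_nat.eventually_lt_const hfpos
    filter_upwards [hb, h1] with n hn hlt
    by_contra h
    push_neg at h
    have hlt2 : b n < max M x₁ := lt_of_lt_of_le h (le_max_left _ _)
    have h4 : K * (max M x₁) ^ α * Real.exp (-C * (max M x₁) ^ τ) < 1 / (n:ℝ) := by
      have h5 := hanti (mem_Ici.2 hn.1) (mem_Ici.2 hM') hlt2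
      simp only at h5
      rw [hn.2] at h5
      exact h5
    linarith
  -- Step 2 : b n ^ (τ-1) * |b n - bt n| → 0
  have hev : ∀ᶠ n in atTop, max 1 (2 * α / (C * τ)) ≤ b n :=
    hbtop.eventually_ge_atTop _
  have key : Tendsto (fun n => b n ^ (τ - 1) * |b n - bt n|) atTop (nhds 0) := by
    have hbound : ∀ᶠ n in atTop,
        b n ^ (τ - 1) * |b n - bt n| ≤ (2 / (C * τ)) * |(b n - bt n) / a n| := by
      filter_upwards [hev] with n hn
      have hb1 : (1:ℝ) ≤ b n := le_trans (le_max_left _ _) hn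
      have hbpos : (0:ℝ) < b n := lt_of_lt_of_le one_pos hb1
      have hbpow : (1:ℝ) ≤ b n ^ (τ - 1) := Real.one_le_rpow hb1 hτ1
      have hαb : α / b n ≤ C * τ / 2 := by
        rw [div_le_iff₀ hbpos]
        have h2 : 2 * α / (C * τ) ≤ b n := le_trans (le_max_right _ _) hn
        calc α = (C * τ / 2) * (2 * α / (C * τ)) := by field_simp
          _ ≤ (C * τ / 2) * b n := by
              exact mul_le_mul_of_nonneg_left h2 (by positivity)
          _ = C * τ / 2 * b n := rfl
      have hD : (C * τ / 2) * b n ^ (τ - 1) ≤ C * τ * b n ^ (τ - 1) - α / b n := by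
        have : α / b n ≤ (C * τ / 2) * b n ^ (τ - 1) := by
          calc α / b n ≤ C * τ / 2 := hαb
            _ = (C * τ / 2) * 1 := by ring
            _ ≤ (C * τ / 2) * b n ^ (τ - 1) :=
              mul_le_mul_of_nonneg_left hbpow (by positivity)
        nlinarith [Real.rpow_nonneg hbpos.le (τ - 1)]
      have hDpos : 0 < C * τ * b n ^ (τ - 1) - α / b n :=
        lt_of_lt_of_le (by positivity) hD
      have haeq : (b n - bt n) / a n = (b n - bt n) * (C * τ * b n ^ (τ - 1) - α / b n) := by
        rw [ha n, one_div, div_eq_mul_inv, inv_inv]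
      rw [haeq, abs_mul, abs_of_pos hDpos]
      have h3 : (C * τ / 2) * (b n ^ (τ - 1) * |b n - bt n|) ≤
          |b n - bt n| * (C * τ * b n ^ (τ - 1) - α / b n) := by
        calc (C * τ / 2) * (b n ^ (τ - 1) * |b n - bt n|)
            = |b n - bt n| * ((C * τ / 2) * b n ^ (τ - 1)) := by ring
          _ ≤ |b n - bt n| * (C * τ * b n ^ (τ - 1) - α / b n) :=
              mul_le_mul_of_nonneg_left hD (abs_nonneg _)
      calc b n ^ (τ - 1) * |b n - bt n|
          = (2 / (C * τ)) * ((C * τ / 2) * (b n ^ (τ - 1) * |b n - bt n|)) := by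
            field_simp
        _ ≤ (2 / (C * τ)) * (|b n - bt n| * (C * τ * b n ^ (τ - 1) - α / b n)) :=
            mul_le_mul_of_nonneg_left h3 (by positivity)
    have hrhs : Tendsto (fun n => (2 / (C * τ)) * |(b n - bt n) / a n|) atTop (nhds 0) := by
      have := (hbtlim.abs).const_mul (2 / (C * τ))
      simpa using this
    refine squeeze_zero' ?_ hbound hrhs
    filter_upwards [hev] with n hn
    have hbpos : (0:ℝ) < b n := lt_of_lt_of_le one_pos (le_trans (le_max_left _ _) hn)
    positivity
  -- Step 3 : |b n - bt n| → 0
  have hdiff : Tendsto (fun n => |b n - bt n|) atTop (nhds 0) := by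
    refine squeeze_zero' (Eventually.of_forall fun n => abs_nonneg _) ?_ key
    filter_upwards [hev] with n hn
    have hb1 : (1:ℝ) ≤ b n := le_trans (le_max_left _ _) hn
    have hbpow : (1:ℝ) ≤ b n ^ (τ - 1) := Real.one_le_rpow hb1 hτ1
    nlinarith [abs_nonneg (b n - bt n)]
  -- Step 4 : conclusion
  have hfin : Tendsto (fun n => τ * 2 ^ (τ - 1) * (b n ^ (τ - 1) * |b n - bt n|))
      atTop (nhds 0) := by
    have := key.const_mul (τ * 2 ^ (τ - 1))
    simpa using this
  refine squeeze_zero_norm' ?_ hfin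
  filter_upwards [hev, hdiff.eventually_le_const one_pos] with n hn hsmall
  have hb1 : (1:ℝ) ≤ b n := le_trans (le_max_left _ _) hn
  have hbpos : (0:ℝ) < b n := lt_of_lt_of_le one_pos hb1
  have hmax : max (b n) (bt n) ≤ 2 * b n := by
    rcases abs_le.1 hsmall with ⟨h1, h2⟩
    refine max_le (by linarith) (by linarith)
  have h1 : |b n ^ τ - bt n ^ τ| ≤ τ * (max (b n) (bt n)) ^ (τ - 1) * |b n - bt n| :=
    aux_rpow_abs hτ hbpos (hbt n)
  have h2 : (max (b n) (bt n)) ^ (τ - 1) ≤ (2 * b n) ^ (τ - 1) :=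
    Real.rpow_le_rpow (le_max_of_le_left hbpos.le) hmax hτ1
  have h3 : ((2:ℝ) * b n) ^ (τ - 1) = 2 ^ (τ - 1) * b n ^ (τ - 1) :=
    Real.mul_rpow (by norm_num) hbpos.le
  rw [Real.norm_eq_abs]
  calc |b n ^ τ - bt n ^ τ| ≤ τ * (max (b n) (bt n)) ^ (τ - 1) * |b n - bt n| := h1
    _ ≤ τ * ((2 * b n) ^ (τ - 1)) * |b n - bt n| := by
        exact mul_le_mul_of_nonneg_right
          (mul_le_mul_of_nonneg_left h2 (by linarith)) (abs_nonneg _)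
    _ = τ * 2 ^ (τ - 1) * (b n ^ (τ - 1) * |b n - bt n|) := by rw [h3]; ring
end

section
/- There exist a constant M > 0 and an index N such that for all n ≥ N, |b_n − (log n + 1 + log(log n + 1) + log(log n + 1)/(log n + 1))| ≤ M (log(log n + 1)/(log n + 1))². -/
set_option maxHeartbeats 1000000


open Filter

private lemma fmono {x y : ℝ} (hx : 1 ≤ x) (hxy : x < y) :
    x - Real.log x < y - Real.log y := by
  have hx0 : 0 < x := lt_of_lt_of_le one_pos hx
  have hy0 : 0 < y := hx0.trans hxy
  have h1 : Real.log y - Real.log x = Real.log (y / x) :=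
    (Real.log_div (ne_of_gt hy0) (ne_of_gt hx0)).symm
  have h2 : Real.log (y / x) < y / x - 1 := by
    apply Real.log_lt_sub_one_of_pos (div_pos hy0 hx0)
    intro h
    rw [div_eq_one_iff_eq (ne_of_gt hx0)] at h
    linarith
  have h3 : y / x ≤ y - x + 1 := by
    rw [div_le_iff₀ hx0]
    nlinarith
  linarith

private lemma log_one_add_ge {u : ℝ} (hu : 0 ≤ u) :
    u - u ^ 2 ≤ Real.log (1 + u) := by
  have h1u : (0:ℝ) < 1 + u := by linarith
  have hv : (1 + u)⁻¹ * (1 + u) = 1 := inv_mul_cancel₀ (ne_of_gt h1u)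
  have h := Real.log_le_sub_one_of_pos (inv_pos.mpr h1u)
  rw [Real.log_inv] at h
  -- h : -Real.log (1+u) ≤ (1+u)⁻¹ - 1
  nlinarith [inv_pos.mpr h1u]

private lemma key_s8 (L c : ℝ) (hL : 3 ≤ Real.log L) (hb1 : 1 ≤ c)
    (heq : c - Real.log c = L) :
    |c - (L + Real.log L + Real.log L / L)| ≤ 16 * (Real.log L / L) ^ 2 := by
  have hc0 : (0:ℝ) < c := lt_of_lt_of_le one_pos hb1
  have hlogc : Real.log c ≤ c - 1 := Real.log_le_sub_one_of_pos hc0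
  have hL1 : 1 ≤ L := by linarith
  have hL0 : (0:ℝ) < L := by linarith
  have hexp : Real.exp 3 ≤ L := by
    have := Real.exp_le_exp.mpr hL
    rwa [Real.exp_log hL0] at this
  have h20 : (20:ℝ) ≤ L := by
    have he : Real.exp 3 = Real.exp 1 * Real.exp 1 * Real.exp 1 := by
      rw [← Real.exp_add, ← Real.exp_add]; norm_num
    nlinarith [Real.exp_one_gt_d9]
  have hlogL_le : Real.log L ≤ L - 1 := Real.log_le_sub_one_of_pos hL0
  set t : ℝ := Real.log L / L with ht_def
  have htL : t * L = Real.log L := div_mul_cancel₀ _ (ne_of_gt hL0)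
  have ht0 : 0 < t := div_pos (by linarith) hL0
  have ht1 : t ≤ 1 := by
    rw [ht_def, div_le_one hL0]; linarith
  set δ : ℝ := 16 * t ^ 2 with hδ_def
  have hδ0 : 0 < δ := by positivity
  have hδ16 : δ ≤ 16 := by nlinarith
  set a : ℝ := L + Real.log L + t with ha_def
  -- upper bound : c ≤ a + δ
  have hupper : c ≤ a + δ := by
    by_contra h
    push_neg at h
    set u : ℝ := t + t / L + δ / L with hu_def
    have hu0 : 0 < u := by positivity
    have huval : u * L = t * L + t + δ := by
      rw [hu_def, add_mul, add_mul, div_mul_cancel₀ _ (ne_of_gt hL0),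
        div_mul_cancel₀ _ (ne_of_gt hL0), div_mul_cancel₀ _ (ne_of_gt hL0)]
    have hfact : a + δ = L * (1 + u) := by
      have h' : L * (1 + u) = L + u * L := by ring
      rw [h', huval, htL, ha_def]; ring
    have h1a : (1:ℝ) ≤ a + δ := by
      have : L ≤ a + δ := by nlinarith
      linarith
    have hmono := fmono h1a h
    rw [heq] at hmono
    -- hmono : (a+δ) - log (a+δ) < L
    have hlog : Real.log (a + δ) = Real.log L + Real.log (1 + u) := by
      rw [hfact, Real.log_mul (ne_of_gt hL0) (by positivity)]
    have hlogu : Real.log (1 + u) ≤ u := by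
      have := Real.log_le_sub_one_of_pos (show (0:ℝ) < 1 + u by linarith)
      linarith
    -- (a+δ) - log(a+δ) ≥ L + t + δ - u  and δ(L-1) ≥ t·L  gives contradiction
    have hkey : t ≤ δ * (L - 1) / L := by
      rw [le_div_iff₀ hL0]
      nlinarith [htL]
    have : L ≤ (a + δ) - Real.log (a + δ) := by
      rw [hlog, ha_def]
      nlinarith [hlogu]
    linarith
  -- lower bound : a - δ ≤ c
  have hlower : a - δ ≤ c := by
    by_contra h
    push_neg at h
    set u : ℝ := t + t / L - δ / L with hu_def
    have huval : u * L = t * L + t - δ := by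
      rw [hu_def, sub_mul, add_mul, div_mul_cancel₀ _ (ne_of_gt hL0),
        div_mul_cancel₀ _ (ne_of_gt hL0), div_mul_cancel₀ _ (ne_of_gt hL0)]
    have hu0 : 0 ≤ u := by
      have : 0 ≤ u * L := by nlinarith [htL]
      nlinarith
    have hu2t : u ≤ 2 * t := by
      have : u * L ≤ 2 * t * L := by nlinarith [htL]
      nlinarith
    have hfact : a - δ = L * (1 + u) := by
      have h' : L * (1 + u) = L + u * L := by ring
      rw [h', huval, htL, ha_def]; ring
    have hmono := fmono hb1 h
    rw [heq] at hmono
    -- hmono : L < (a-δ) - log (a-δ)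
    have hlog : Real.log (a - δ) = Real.log L + Real.log (1 + u) := by
      rw [hfact, Real.log_mul (ne_of_gt hL0) (by positivity)]
    have hlogu : u - u ^ 2 ≤ Real.log (1 + u) := log_one_add_ge hu0
    have : (a - δ) - Real.log (a - δ) ≤ L := by
      rw [hlog, ha_def]
      -- reduces to t - δ - log(1+u) ≤ 0
      -- t - δ - (u - u²) = -δ(L-1)/L - t/L + u² ≤ -15t² - t/L + 4t² < 0
      nlinarith [hlogu, sq_nonneg t, sq_nonneg u, mul_pos ht0 hL0]
    linarith
  rw [abs_le]
  exact ⟨by linarith, by linarith⟩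

/-- Expansion (14): for the simple generalized Weibull case
`e · b_n · e^{-b_n} = 1/n` (with `b_n ≥ 1`), one has
`b_n = log n + 1 + log(log n + 1) + log(log n + 1)/(log n + 1) + O((log(log n + 1)/(log n + 1))²)`. -/
theorem stmt_8 (b : ℕ → ℝ)
    (hb : ∀ n : ℕ, 2 ≤ n →
      1 ≤ b n ∧ Real.exp 1 * b n * Real.exp (-b n) = 1 / (n : ℝ)) :
    ∃ M > (0 : ℝ), ∃ N : ℕ, ∀ n ≥ N,
      |b n - (Real.log n + 1 + Real.log (Real.log n + 1)
          + Real.log (Real.log n + 1) / (Real.log n + 1))|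
        ≤ M * (Real.log (Real.log n + 1) / (Real.log n + 1)) ^ 2 := by
  refine ⟨16, by norm_num, ?_⟩
  have t1 : Tendsto (fun n : ℕ => Real.log n) atTop atTop :=
    Real.tendsto_log_atTop.comp tendsto_natCast_atTop_atTop
  have t2 : Tendsto (fun n : ℕ => Real.log n + 1) atTop atTop :=
    tendsto_atTop_add_const_right _ 1 t1
  have t3 : Tendsto (fun n : ℕ => Real.log (Real.log n + 1)) atTop atTop :=
    Real.tendsto_log_atTop.comp t2
  obtain ⟨N, hN⟩ := eventually_atTop.mp
    ((t3.eventually_ge_atTop 3).and (eventually_ge_atTop 2))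
  refine ⟨N, fun n hn => ?_⟩
  obtain ⟨h3, h2⟩ := hN n hn
  obtain ⟨hb1, hbeq⟩ := hb n h2
  have hn0 : (0:ℝ) < (n:ℝ) := by
    have : (2:ℝ) ≤ (n:ℝ) := by exact_mod_cast h2
    linarith
  have hbpos : (0:ℝ) < b n := lt_of_lt_of_le one_pos hb1
  have heq : b n - Real.log (b n) = Real.log n + 1 := by
    have hlog := congrArg Real.log hbeq
    rw [Real.log_mul (by positivity) (Real.exp_ne_zero _),
        Real.log_mul (Real.exp_ne_zero _) (ne_of_gt hbpos),
        Real.log_exp, Real.log_exp, one_div, Real.log_inv] at hlog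
    linarith
  exact key_s8 (Real.log n + 1) (b n) h3 hb1 heq
end

section
/- There exist a constant M > 0 and an index N such that for all n ≥ N, |b_n − (log n + log log n + 1)| ≤ M log(log n)/log n. That is, the standard centering constant b'_n = log n + log log n + 1 satisfies b_n − b'_n = O(log log n / log n). -/
/-!
Taking logarithms, `b = b_n` solves `b = L + log b + 1` with `L = log n`, so
`b - (L + log L + 1) = log (b / L)`. Since `log b ≥ 0` we have `b ≥ L`, and since
`log b ≤ b / e ≤ b / 2` we have `b ≤ 2L + 2 ≤ L²`. Hence
`0 ≤ log (b / L) ≤ b / L - 1 = (log b + 1) / L ≤ (2 log L + 1) / L ≤ 3 log L / L`.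
-/

open Real

lemma Real.log_le_div_exp_one {x : ℝ} (hx : 0 < x) : log x ≤ x / exp 1 := by
  have h := log_le_sub_one_of_pos (div_pos hx (exp_pos 1))
  rw [log_div hx.ne' (exp_pos 1).ne', log_exp] at h
  linarith

lemma eq_log_add_log_add_one_of_exp_one_mul_mul_exp_neg {x y : ℝ} (hx : 0 < x)
    (h : exp 1 * x * exp (-x) = 1 / y) : x = log y + log x + 1 := by
  have h := congrArg log h
  rw [log_mul (by positivity) (exp_ne_zero _), log_mul (exp_ne_zero _) hx.ne', log_exp, log_exp,
    one_div, log_inv] at h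
  linarith

lemma three_le_log_of_twentyseven_le {y : ℝ} (hy : 27 ≤ y) : 3 ≤ log y := by
  rw [le_log_iff_exp_le (by linarith)]
  calc exp 3 = exp 1 ^ 3 := by rw [← exp_nat_mul]; norm_num
    _ ≤ 3 ^ 3 := by gcongr; exact exp_one_lt_three.le
    _ ≤ y := by linarith

section FixedPoint

variable {L x : ℝ}

lemma le_two_mul_add_two_of_eq_add_log_add_one (hx₀ : 0 < x) (hx : x = L + log x + 1) :
    x ≤ 2 * L + 2 := by
  have hlog : log x ≤ x / 2 :=
    (log_le_div_exp_one hx₀).trans (div_le_div_of_nonneg_left hx₀.le two_pos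
      (by linarith [exp_one_gt_d9]))
  linarith

lemma log_le_two_mul_log_of_eq_add_log_add_one (hL : 3 ≤ L) (hx₀ : 0 < x)
    (hx : x = L + log x + 1) : log x ≤ 2 * log L := by
  have hxL : x ≤ L ^ 2 := by nlinarith [le_two_mul_add_two_of_eq_add_log_add_one hx₀ hx]
  calc log x ≤ log (L ^ 2) := log_le_log hx₀ hxL
    _ = 2 * log L := by rw [log_pow]; norm_num

lemma abs_sub_add_log_add_one_le_of_eq_add_log_add_one (hL : 3 ≤ L) (hx₁ : 1 ≤ x)
    (hx : x = L + log x + 1) : |x - (L + log L + 1)| ≤ 3 * log L / L := by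
  have hx₀ : 0 < x := by linarith
  have hL₀ : 0 < L := by linarith
  have hlogx : 0 ≤ log x := log_nonneg hx₁
  have hlogL : 1 ≤ log L := by
    rw [le_log_iff_exp_le hL₀]; linarith [exp_one_lt_three]
  have hdiff : x - (L + log L + 1) = log (x / L) := by
    rw [log_div hx₀.ne' hL₀.ne']; linarith
  have hlower : 0 ≤ log (x / L) := log_nonneg ((one_le_div hL₀).mpr (by linarith))
  have hupper : log (x / L) ≤ (log x + 1) / L := by
    calc log (x / L) ≤ x / L - 1 := log_le_sub_one_of_pos (by positivity)
      _ = (log x + 1) / L := by field_simp; linarith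
  rw [hdiff, abs_of_nonneg hlower]
  calc log (x / L) ≤ (log x + 1) / L := hupper
    _ ≤ 3 * log L / L := by
      gcongr
      linarith [log_le_two_mul_log_of_eq_add_log_add_one hL hx₀ hx]

end FixedPoint

/-- For the simple generalized Weibull case `e · b_n · e^{-b_n} = 1/n` (with `b_n ≥ 1`),
the standard centering constant `b'_n = log n + log log n + 1` satisfies
`b_n - b'_n = O(log log n / log n)`. -/
theorem stmt_9 (b : ℕ → ℝ)
    (hb : ∀ n : ℕ, 2 ≤ n →
      1 ≤ b n ∧ Real.exp 1 * b n * Real.exp (-b n) = 1 / (n : ℝ)) :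
    ∃ M > (0 : ℝ), ∃ N : ℕ, ∀ n ≥ N,
      |b n - (Real.log n + Real.log (Real.log n) + 1)|
        ≤ M * Real.log (Real.log n) / Real.log n := by
  refine ⟨3, by norm_num, 27, fun n hn => ?_⟩
  obtain ⟨hb₁, hbn⟩ := hb n (by omega)
  have hn₂₇ : (27 : ℝ) ≤ n := by exact_mod_cast hn
  exact abs_sub_add_log_add_one_le_of_eq_add_log_add_one (three_le_log_of_twentyseven_le hn₂₇) hb₁
    (eq_log_add_log_add_one_of_exp_one_mul_mul_exp_neg (by linarith) hbn)
end

section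
/- Fix β > 0 and for small x > 0 let t(x) denote the unique large solution of t^β e^{−t} = x (i.e. the solution with t(x) → ∞ as x → 0⁺). Then there exist constants M > 0 and x₀ ∈ (0,1) such that for all 0 < x < x₀, |t(x) + log x − β log(log(1/x)) − β² log(log(1/x))/log(1/x)| ≤ M (log(log(1/x))/log(1/x))². -/
open Filter Set

set_option maxHeartbeats 1000000 in
/-- Appendix A1, Comtet-type expansion truncated at `N = 1`: if `t(x)` is the unique
large solution of `t^β e^{-t} = x` for small `x > 0`, then
`t(x) = -log x + β log log(1/x) + β² log log(1/x)/log(1/x) + O((log log(1/x)/log(1/x))²)`. -/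
theorem stmt_10 (β : ℝ) (hβ : 0 < β) (t : ℝ → ℝ)
    (ht : ∀ᶠ x in nhdsWithin (0 : ℝ) (Set.Ioi 0),
      β ≤ t x ∧ t x ^ β * Real.exp (-t x) = x) :
    ∃ M > (0 : ℝ), ∃ x₀ ∈ Set.Ioo (0 : ℝ) 1, ∀ x : ℝ, 0 < x → x < x₀ →
      |t x + Real.log x - β * Real.log (Real.log (1 / x))
          - β ^ 2 * Real.log (Real.log (1 / x)) / Real.log (1 / x)|
        ≤ M * (Real.log (Real.log (1 / x)) / Real.log (1 / x)) ^ 2 := by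
  rw [Filter.eventually_iff, mem_nhdsGT_iff_exists_Ioo_subset] at ht
  obtain ⟨δ, hδ, hsub⟩ := ht
  rw [Set.mem_Ioi] at hδ
  set L₀ : ℝ := 256 * β ^ 2 + 10 with hL₀def
  have hL₀pos : 0 < L₀ := by positivity
  refine ⟨6 * β ^ 3 + 1, by positivity,
    min δ (min (Real.exp (-L₀)) (β ^ β * Real.exp (-1))), ⟨?_, ?_⟩, ?_⟩
  · exact lt_min hδ (lt_min (Real.exp_pos _)
      (mul_pos (Real.rpow_pos_of_pos hβ _) (Real.exp_pos _)))
  · calc min δ (min (Real.exp (-L₀)) (β ^ β * Real.exp (-1)))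
        ≤ Real.exp (-L₀) := le_trans (min_le_right _ _) (min_le_left _ _)
      _ < 1 := by
          rw [Real.exp_lt_one_iff]; linarith
  intro x hx hxlt
  have hxδ : x < δ := lt_of_lt_of_le hxlt (min_le_left _ _)
  obtain ⟨htβ, heq⟩ := hsub ⟨hx, hxδ⟩
  have ht0 : 0 < t x := lt_of_lt_of_le hβ htβ
  set T := t x with hT
  set L : ℝ := Real.log (1 / x) with hL
  have hlogx : Real.log x = -L := by rw [hL, one_div, Real.log_inv]; ring
  -- L is large
  have hLgt : L₀ < L := by
    have hxe : x < Real.exp (-L₀) :=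
      lt_of_lt_of_le hxlt (le_trans (min_le_right _ _) (min_le_left _ _))
    have h := Real.log_lt_log hx hxe
    rw [Real.log_exp] at h
    linarith [hlogx ▸ h]
  have hL10 : (10 : ℝ) ≤ L := by nlinarith
  have hLpos : 0 < L := by linarith
  -- the basic equation
  have heq' : T = L + β * Real.log T := by
    have h := congrArg Real.log heq
    rw [Real.log_mul (Real.rpow_pos_of_pos ht0 β).ne' (Real.exp_pos _).ne',
      Real.log_rpow ht0, Real.log_exp, hlogx] at h
    linarith
  -- T ≥ 1
  have hT1 : (1 : ℝ) ≤ T := by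
    by_contra h
    push_neg at h
    have h1 : β ^ β ≤ T ^ β := Real.rpow_le_rpow hβ.le htβ hβ.le
    have h2 : Real.exp (-1) ≤ Real.exp (-T) := Real.exp_le_exp.mpr (by linarith)
    have h3 : β ^ β * Real.exp (-1) ≤ T ^ β * Real.exp (-T) :=
      mul_le_mul h1 h2 (Real.exp_pos _).le (Real.rpow_pos_of_pos ht0 _).le
    have h4 : x < β ^ β * Real.exp (-1) :=
      lt_of_lt_of_le hxlt (le_trans (min_le_right _ _) (min_le_right _ _))
    rw [heq] at h3
    linarith
  have hlogT0 : 0 ≤ Real.log T := Real.log_nonneg hT1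
  have hTL : L ≤ T := by nlinarith
  -- T ≤ 2L
  have hT2L : T ≤ 2 * L := by
    by_contra h
    push_neg at h
    set s := Real.sqrt T with hs
    have hs0 : 0 < s := Real.sqrt_pos.mpr ht0
    have hsT : s ^ 2 = T := Real.sq_sqrt ht0.le
    have hlogs : Real.log T ≤ 2 * s := by
      have h1 : Real.log T = 2 * Real.log s := by
        rw [hs, Real.log_sqrt ht0.le]; ring
      have h2 : Real.log s ≤ s - 1 := Real.log_le_sub_one_of_pos hs0
      linarith
    nlinarith [mul_le_mul_of_nonneg_left hlogs hβ.le, sq_nonneg (s - 4 * β)]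
  have hTL2 : T ≤ L ^ 2 := by nlinarith
  have hlogT2 : Real.log T ≤ 2 * Real.log L := by
    have h1 : Real.log T ≤ Real.log (L ^ 2) := Real.log_le_log ht0 hTL2
    have h2 : Real.log (L ^ 2) = 2 * Real.log L := by
      rw [Real.log_pow]; push_cast; ring
    linarith
  set l := Real.log L with hl
  have hl1 : (1 : ℝ) ≤ l := by
    rw [hl, Real.le_log_iff_exp_le hLpos]
    have := Real.exp_one_lt_d9
    linarith
  set w := L⁻¹ with hw
  have hw0 : 0 < w := inv_pos.mpr hLpos
  have hLw : L * w = 1 := mul_inv_cancel₀ hLpos.ne'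
  set u := β * Real.log T * w with hu
  have hu0 : 0 ≤ u := by positivity
  have h1u : 1 + u = T * w := by
    rw [hu]; linear_combination (-w) * heq' - hLw
  have h1upos : 0 < 1 + u := by linarith
  have ha_def : Real.log (1 + u) = Real.log T - l := by
    rw [h1u, Real.log_mul ht0.ne' hw0.ne', hw, Real.log_inv, hl]; ring
  set a := Real.log (1 + u) with ha
  have ha_le_u : a ≤ u := by
    have := Real.log_le_sub_one_of_pos h1upos
    linarith
  have ha_ge : u - u ^ 2 ≤ a := by
    have h := Real.log_le_sub_one_of_pos (inv_pos.mpr h1upos)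
    rw [Real.log_inv] at h
    have hinv : (1 + u)⁻¹ * (1 + u) = 1 := inv_mul_cancel₀ h1upos.ne'
    nlinarith [mul_nonneg (mul_nonneg hu0 hu0) hu0]
  have ha0 : 0 ≤ a := Real.log_nonneg (by linarith)
  have hu_le : u ≤ 2 * β * l * w := by
    rw [hu]
    have h1 := mul_le_mul_of_nonneg_right
      (mul_le_mul_of_nonneg_left hlogT2 hβ.le) hw0.le
    have h2 : β * (2 * Real.log L) * w = 2 * β * l * w := by rw [hl]; ring
    linarith
  have hbu : β * u = β ^ 2 * (a * w) + β ^ 2 * (l * w) := by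
    rw [hu, ha_def]; ring
  -- rewrite the goal
  have e1 : T + Real.log x - β * l - β ^ 2 * l / L = β * a - β ^ 2 * (l * w) := by
    rw [hlogx, ha_def, div_eq_mul_inv, ← hw]
    linear_combination heq'
  have e2 : (l / L) ^ 2 = (l * w) ^ 2 := by rw [div_eq_mul_inv]
  rw [e1, e2, abs_le]
  clear_value T L l w u a
  clear hsub hxlt heq hxδ hx htβ hlogx hLgt heq' hT1 hTL hT2L hTL2 e1 e2 hlogT2 hlogT0 ht0

  have husq : u ^ 2 ≤ (2 * β * l * w) ^ 2 := pow_le_pow_left₀ hu0 hu_le 2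
  have h_u2 : β * u ^ 2 ≤ β * (2 * β * l * w) ^ 2 :=
    mul_le_mul_of_nonneg_left husq hβ.le
  have h_aw : 0 ≤ β ^ 2 * (a * w) := mul_nonneg (sq_nonneg β) (mul_nonneg ha0 hw0.le)
  constructor
  · -- lower bound
    have h_ge : β * (u - u ^ 2) ≤ β * a := mul_le_mul_of_nonneg_left ha_ge hβ.le
    nlinarith [sq_nonneg (l * w), pow_nonneg hβ.le 3]
  · have h_au : β * a ≤ β * u := mul_le_mul_of_nonneg_left ha_le_u hβ.le
    have h_aw2 : β ^ 2 * w * a ≤ β ^ 2 * w * u :=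
      mul_le_mul_of_nonneg_left ha_le_u (by positivity)
    have h_uw : β ^ 2 * w * u ≤ β ^ 2 * w * (2 * β * l * w) :=
      mul_le_mul_of_nonneg_left hu_le (by positivity)
    nlinarith [sq_nonneg (l * w), pow_nonneg hβ.le 3,
      mul_nonneg (mul_nonneg (pow_nonneg hβ.le 3) (sq_nonneg w)) (sub_nonneg.mpr hl1)]
end

section
/- Fix β > 0 and for small x > 0 let t(x) denote the unique large solution of t^β e^{−t} = x. Then there exist constants M > 0 and x₀ ∈ (0,1) such that for all 0 < x < x₀, |t(x) + log(x/β^β) − β log|log(x^{1/β}/β)| − β² log|log(x^{1/β}/β)| / log(β^β/x)| ≤ M (log|log(x^{1/β}/β)| / log(β^β/x))². -/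
open Filter Set

/-! Put `L = log (β^β / x)` and `ℓ = log (L / β)`. Taking logarithms, the equation becomes the fixed
point relation `t = L + β log (t / β)`, so `t ≥ L`, and writing `t = L (1 + d)` it reads
`d L = β ℓ + β log (1 + d)`. This forces `d ≤ 2 β ℓ / L`, and the error of the expansion is
`β log (1 + d) - β² ℓ / L = β (log (1 + d) - d) + β² log (1 + d) / L`, whose two terms are
`O(d²)` and `O(d / L)`, both `O((ℓ / L)²)`. -/

namespace Real

lemma sub_sq_le_log_one_add {d : ℝ} (hd : 0 ≤ d) : d - d ^ 2 ≤ log (1 + d) := by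
  refine le_trans ?_ (le_log_one_add_of_nonneg hd)
  rw [le_div_iff₀ (by linarith)]
  nlinarith [sq_nonneg d, mul_nonneg hd (sq_nonneg d)]

lemma log_one_add_le_self {d : ℝ} (hd : 0 ≤ d) : log (1 + d) ≤ d := by
  linarith [log_le_sub_one_of_pos (show 0 < 1 + d by linarith)]

end Real

open Real

section FixedPoint

variable {β L ℓ d : ℝ}

lemma le_two_mul_div_of_mul_eq_add_log (hβ : 0 < β) (hL : 2 * β ≤ L) (hd : 0 ≤ d)
    (hfix : d * L = β * ℓ + β * log (1 + d)) : d ≤ 2 * β * ℓ / L := by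
  have hlog : β * log (1 + d) ≤ β * d := mul_le_mul_of_nonneg_left (log_one_add_le_self hd) hβ.le
  rw [le_div_iff₀ (by linarith)]
  nlinarith

lemma abs_mul_log_one_add_sub_le (hβ : 0 < β) (hL : 2 * β ≤ L) (hℓ : 1 ≤ ℓ) (hd : 0 ≤ d)
    (hfix : d * L = β * ℓ + β * log (1 + d)) :
    |β * log (1 + d) - β ^ 2 * ℓ / L| ≤ 4 * β ^ 3 * (ℓ / L) ^ 2 := by
  have hL0 : 0 < L := by linarith
  set r := ℓ / L with hr
  have hdr : d ≤ 2 * β * r := by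
    rw [hr, ← mul_div_assoc]; exact le_two_mul_div_of_mul_eq_add_log hβ hL hd hfix
  have hLr : 1 / L ≤ r := div_le_div_of_nonneg_right hℓ hL0.le
  have herror : β * log (1 + d) - β ^ 2 * ℓ / L
      = β * (log (1 + d) - d) + β ^ 2 * log (1 + d) / L := by
    have : β ^ 2 * ℓ / L = β * d - β ^ 2 * log (1 + d) / L := by
      rw [eq_sub_iff_add_eq, ← add_div, div_eq_iff hL0.ne']
      linear_combination (-β) * hfix
    rw [this]; ring
  have hlow := sub_sq_le_log_one_add hd
  have hup := log_one_add_le_self hd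
  have hdr2 : d ^ 2 ≤ (2 * β * r) ^ 2 := pow_le_pow_left₀ hd hdr 2
  have hquot : log (1 + d) / L ≤ 2 * β * r * r :=
    calc log (1 + d) / L ≤ d * (1 / L) := by rw [mul_one_div]; gcongr
      _ ≤ 2 * β * r * r := mul_le_mul hdr hLr (by positivity) (by positivity)
  rw [herror, abs_le]
  constructor
  · have : 0 ≤ β ^ 2 * log (1 + d) / L := by
      have := log_nonneg (show 1 ≤ 1 + d by linarith)
      positivity
    nlinarith
  · have : β ^ 2 * log (1 + d) / L ≤ β ^ 2 * (2 * β * r * r) := by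
      rw [mul_div_assoc]; gcongr
    nlinarith [sq_nonneg r]

theorem abs_sub_expansion_le_of_eq_add_log {t : ℝ} (hβ : 0 < β) (hL : exp 1 ≤ L / β)
    (ht : β ≤ t) (hfix : t = L + β * log (t / β)) :
    |t - L - β * log (L / β) - β ^ 2 * log (L / β) / L| ≤ 4 * β ^ 3 * (log (L / β) / L) ^ 2 := by
  have h2L : 2 * β ≤ L := by
    have := add_one_le_exp (1 : ℝ)
    rw [le_div_iff₀ hβ] at hL
    nlinarith
  have hL0 : 0 < L := by linarith
  have hℓ : 1 ≤ log (L / β) := by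
    rw [le_log_iff_exp_le (div_pos hL0 hβ)]; exact hL
  have htL : L ≤ t := by
    have := log_nonneg ((one_le_div hβ).mpr ht)
    nlinarith
  have hsplit : log (t / β) = log (1 + (t / L - 1)) + log (L / β) := by
    have ht0 : 0 < t := hβ.trans_le ht
    rw [add_sub_cancel, ← log_mul (div_pos ht0 hL0).ne' (div_pos hL0 hβ).ne']
    field_simp
  have hd : 0 ≤ t / L - 1 := by rw [sub_nonneg, one_le_div hL0]; exact htL
  have hdfix : (t / L - 1) * L = β * log (L / β) + β * log (1 + (t / L - 1)) := by
    rw [sub_mul, div_mul_cancel₀ _ hL0.ne']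
    linear_combination hfix + β * hsplit
  convert abs_mul_log_one_add_sub_le hβ h2L hℓ hd hdfix using 2
  linear_combination hfix + β * hsplit

end FixedPoint

lemma eq_log_add_mul_log_of_rpow_mul_exp_eq {β t x : ℝ} (hβ : 0 < β) (hx : 0 < x) (ht : 0 < t)
    (h : t ^ β * exp (-t) = x) : t = log (β ^ β / x) + β * log (t / β) := by
  have hlog := congrArg log h
  rw [log_mul (rpow_pos_of_pos ht β).ne' (exp_ne_zero _), log_rpow ht, log_exp] at hlog
  rw [log_div (rpow_pos_of_pos hβ β).ne' hx.ne', log_rpow hβ, log_div ht.ne' hβ.ne']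
  linarith

lemma log_div_rpow_self_eq_neg (x β : ℝ) : log (x / β ^ β) = -log (β ^ β / x) := by
  rw [← log_inv, inv_div]

lemma log_abs_log_rpow_inv_div_eq {β x : ℝ} (hβ : 0 < β) (hx : 0 < x) :
    log |log (x ^ (1 / β) / β)| = log (log (β ^ β / x) / β) := by
  have : log (x ^ (1 / β) / β) = -(log (β ^ β / x) / β) := by
    rw [log_div (rpow_pos_of_pos hx _).ne' hβ.ne', log_rpow hx,
      log_div (rpow_pos_of_pos hβ β).ne' hx.ne', log_rpow hβ]
    field_simp
    ring
  rw [this, log_abs, log_neg_eq_log]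

lemma tendsto_log_rpow_self_div_div_nhdsGT_zero {β : ℝ} (hβ : 0 < β) :
    Tendsto (fun x => log (β ^ β / x) / β) (nhdsWithin 0 (Ioi 0)) atTop := by
  have hinv := (tendsto_inv_nhdsGT_zero (𝕜 := ℝ)).const_mul_atTop (rpow_pos_of_pos hβ β)
  simp only [← div_eq_mul_inv] at hinv
  exact (tendsto_log_atTop.comp hinv).atTop_div_const hβ

/-- Appendix A1, Lambert-W-type expansion truncated at `N = 1`: if `t(x)` is the unique
large solution of `t^β e^{-t} = x` for small `x > 0`, then
`t(x) = -log(x/β^β) + β log|log(x^{1/β}/β)| + β² log|log(x^{1/β}/β)|/log(β^β/x)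
  + O((log|log(x^{1/β}/β)|/log(β^β/x))²)`. -/
theorem stmt_11 (β : ℝ) (hβ : 0 < β) (t : ℝ → ℝ)
    (ht : ∀ᶠ x in nhdsWithin (0 : ℝ) (Set.Ioi 0),
      β ≤ t x ∧ t x ^ β * Real.exp (-t x) = x) :
    ∃ M > (0 : ℝ), ∃ x₀ ∈ Set.Ioo (0 : ℝ) 1, ∀ x : ℝ, 0 < x → x < x₀ →
      |t x + Real.log (x / β ^ β)
          - β * Real.log |Real.log (x ^ (1 / β) / β)|
          - β ^ 2 * Real.log |Real.log (x ^ (1 / β) / β)| / Real.log (β ^ β / x)|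
        ≤ M * (Real.log |Real.log (x ^ (1 / β) / β)| / Real.log (β ^ β / x)) ^ 2 := by
  have hev := ht.and ((tendsto_log_rpow_self_div_div_nhdsGT_zero hβ).eventually_ge_atTop (exp 1))
  obtain ⟨u, hu, hsub⟩ := mem_nhdsGT_iff_exists_Ioo_subset.mp hev
  have hu1 : 0 < min u 1 := lt_min hu one_pos
  refine ⟨4 * β ^ 3, by positivity, min u 1 / 2,
    ⟨by linarith, by linarith [min_le_right u 1]⟩, fun x hx hxu => ?_⟩
  obtain ⟨⟨hβt, heq⟩, hL⟩ := hsub ⟨hx, by linarith [min_le_left u 1]⟩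
  rw [log_div_rpow_self_eq_neg, log_abs_log_rpow_inv_div_eq hβ hx, ← sub_eq_add_neg]
  exact abs_sub_expansion_le_of_eq_add_log hβ hL hβt
    (eq_log_add_mul_log_of_rpow_mul_exp_eq hβ hx (hβ.trans_le hβt) heq)
end

section
/- Set M₁(n) = log(Cτ / (α (K n)^{τ/α})) and M₂(n) = log(−M₁(n)). Then there exist a constant M > 0 and an index N such that for all n ≥ N, |(Cτ/α) b_n^τ + M₁(n) − M₂(n) + M₂(n)/M₁(n)| ≤ M (M₂(n)/M₁(n))². That is, b_n = (α/(Cτ))^{1/τ} (−M₁ + M₂ − M₂/M₁ + O((M₂/M₁)²))^{1/τ}. -/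
open Filter Set

/-- Core real-analysis lemma: if `y - log y = L` with `y ≥ 2` and `L` large,
then `y = L + log L + log L / L + O((log L / L)^2)`. -/
lemma stmt_12_core (L y : ℝ) (hL : 10 ≤ L) (hl : 2 ≤ Real.log L) (hy : 2 ≤ y)
    (heq : y - Real.log y = L) :
    |y - (L + Real.log L + Real.log L / L)| ≤ 8 * (Real.log L / L) ^ 2 := by
  obtain ⟨l, hldef⟩ : ∃ l, l = Real.log L := ⟨_, rfl⟩
  rw [← hldef] at hl ⊢
  have hL0 : (0 : ℝ) < L := by linarith
  obtain ⟨u, hu⟩ : ∃ u, u = l / L := ⟨_, rfl⟩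
  rw [← hu]
  have hul : u * L = l := by rw [hu]; exact div_mul_cancel₀ _ (ne_of_gt hL0)
  have hu0 : 0 < u := by rw [hu]; exact div_pos (by linarith) hL0
  have hlL : l ≤ L - 1 := hldef ▸ Real.log_le_sub_one_of_pos hL0
  have hu1 : u ≤ 1 := by rw [hu, div_le_one hL0]; linarith
  obtain ⟨yp, hyp⟩ : ∃ yp : ℝ, yp = L + l + u + 8 * u ^ 2 := ⟨_, rfl⟩
  obtain ⟨ym, hym⟩ : ∃ ym : ℝ, ym = L + l + u - 8 * u ^ 2 := ⟨_, rfl⟩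
  have hym2 : 2 ≤ ym := by rw [hym]; nlinarith
  have hyp2 : 2 ≤ yp := by rw [hyp]; nlinarith
  have hyp0 : (0 : ℝ) < yp := by linarith
  have hym0 : (0 : ℝ) < ym := by linarith
  have mono : ∀ a c : ℝ, 2 ≤ a → a < c → a - Real.log a < c - Real.log c := by
    intro a c ha hac
    have ha0 : (0 : ℝ) < a := by linarith
    have h1 : Real.log c - Real.log a = Real.log (c / a) :=
      (Real.log_div (by linarith) (ne_of_gt ha0)).symm
    have h2 : Real.log (c / a) ≤ c / a - 1 :=
      Real.log_le_sub_one_of_pos (div_pos (by linarith) ha0)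
    have h4 : c / a - 1 < c - a := by
      rw [sub_lt_iff_lt_add, div_lt_iff₀ ha0]; nlinarith
    linarith
  have hupper : L ≤ yp - Real.log yp := by
    have h1 : Real.log yp - Real.log L = Real.log (yp / L) :=
      (Real.log_div (ne_of_gt hyp0) (ne_of_gt hL0)).symm
    have h2 : Real.log (yp / L) ≤ yp / L - 1 :=
      Real.log_le_sub_one_of_pos (div_pos hyp0 hL0)
    have h4 : yp / L ≤ 1 + u + 8 * u ^ 2 := by
      rw [div_le_iff₀ hL0, hyp]; nlinarith [hul, hu0, hu1]
    rw [← hldef] at h1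
    linarith [hyp ▸ h4, hyp ▸ h2, hyp ▸ h1]
  have hlower : ym - Real.log ym ≤ L := by
    have h1 : Real.log L - Real.log ym = Real.log (L / ym) :=
      (Real.log_div (ne_of_gt hL0) (ne_of_gt hym0)).symm
    have h2 : Real.log (L / ym) ≤ L / ym - 1 :=
      Real.log_le_sub_one_of_pos (div_pos hL0 hym0)
    have h4 : L / ym ≤ 1 - u + 8 * u ^ 2 := by
      rw [div_le_iff₀ hym0, hym]
      have h5 : u ^ 2 * L = u * l := by rw [← hul]; ring
      have h6 : 10 * u ^ 2 ≤ u ^ 2 * L := by nlinarith [sq_nonneg u]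
      have h7 : 2 * u ^ 2 ≤ u ^ 2 * l := by nlinarith [sq_nonneg u]
      have h8 : u ^ 2 * u ^ 2 ≤ u ^ 2 := by nlinarith [sq_nonneg u]
      nlinarith [hul, hu0, hu1, h5, h6, h7, h8, sq_nonneg u]
    rw [← hldef] at h1
    linarith
  have hyyp : y ≤ yp := by
    by_contra h
    push_neg at h
    have := mono yp y hyp2 h
    linarith
  have hymy : ym ≤ y := by
    by_contra h
    push_neg at h
    have := mono y ym hy h
    linarith
  rw [abs_le]
  constructor
  · rw [hym] at hymy; linarith
  · rw [hyp] at hyyp; linarith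

/-- Expansion (26) via the Lambert W function: with
`M₁(n) = log(Cτ/(α (Kn)^{τ/α}))` and `M₂(n) = log(-M₁(n))`,
the centering constant satisfies
`(Cτ/α) b_n^τ = -M₁ + M₂ - M₂/M₁ + O((M₂/M₁)²)`. -/
theorem stmt_12 (K C α τ x₁ : ℝ) (hK : 0 < K) (hC : 0 < C) (hα : 0 < α) (hτ : 1 ≤ τ)
    (hx₁ : 0 < x₁)
    (hanti : StrictAntiOn (fun x : ℝ => K * x ^ α * Real.exp (-C * x ^ τ)) (Set.Ici x₁))
    (hlim : Tendsto (fun x : ℝ => K * x ^ α * Real.exp (-C * x ^ τ)) atTop (nhds 0))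
    (hrange : ∀ x ≥ x₁, K * x ^ α * Real.exp (-C * x ^ τ) ∈ Set.Ioc (0 : ℝ) 1)
    (b : ℕ → ℝ)
    (hb : ∀ᶠ n : ℕ in atTop,
      x₁ ≤ b n ∧ K * b n ^ α * Real.exp (-C * b n ^ τ) = 1 / (n : ℝ))
    (M₁ M₂ : ℕ → ℝ)
    (hM₁ : ∀ n : ℕ, M₁ n = Real.log (C * τ / (α * (K * n) ^ (τ / α))))
    (hM₂ : ∀ n : ℕ, M₂ n = Real.log (-M₁ n)) :
    ∃ M > (0 : ℝ), ∃ N : ℕ, ∀ n ≥ N,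
      |C * τ / α * b n ^ τ + M₁ n - M₂ n + M₂ n / M₁ n|
        ≤ M * (M₂ n / M₁ n) ^ 2 := by
  refine ⟨8, by norm_num, ?_⟩
  have hτ0 : (0 : ℝ) < τ := by linarith
  have hCτ : (0 : ℝ) < C * τ := by positivity
  have hαne : α ≠ 0 := ne_of_gt hα
  set c : ℝ := C * τ / α * x₁ ^ τ with hc
  have hc0 : 0 < c := by positivity
  set L : ℕ → ℝ := fun n => -M₁ n with hLdef
  set f : ℕ → ℝ := fun n : ℕ =>
    τ / α * (Real.log K + Real.log n) + (Real.log α - Real.log (C * τ)) with hfdef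
  have hf : Tendsto f atTop atTop := by
    apply tendsto_atTop_add_const_right
    apply Tendsto.const_mul_atTop (div_pos hτ0 hα)
    apply tendsto_atTop_add_const_left
    exact Real.tendsto_log_atTop.comp tendsto_natCast_atTop_atTop
  have hLfn : ∀ n : ℕ, 1 ≤ n → L n = f n := by
    intro n hn
    have hn0 : (0 : ℝ) < n := by exact_mod_cast hn
    have hKn : (0 : ℝ) < K * n := by positivity
    have hKn' : (0 : ℝ) < (K * n) ^ (τ / α) := Real.rpow_pos_of_pos hKn _
    show -M₁ n = f n
    rw [hM₁ n, Real.log_div (ne_of_gt hCτ) (by positivity),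
      Real.log_mul hαne (ne_of_gt hKn'), Real.log_rpow hKn,
      Real.log_mul (ne_of_gt hK) (ne_of_gt hn0), Real.log_mul (ne_of_gt hC) (ne_of_gt hτ0)]
    simp only [hfdef]
    rw [Real.log_mul (ne_of_gt hC) (ne_of_gt hτ0)]
    ring
  have hLf : L =ᶠ[atTop] f := (eventually_ge_atTop 1).mono hLfn
  have hLtop : Tendsto L atTop atTop := hf.congr' hLf.symm
  have e1 : ∀ᶠ n : ℕ in atTop, 10 ≤ L n := hLtop.eventually_ge_atTop 10
  have e2 : ∀ᶠ n : ℕ in atTop, 2 ≤ Real.log (L n) :=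
    (Real.tendsto_log_atTop.comp hLtop).eventually_ge_atTop 2
  have e3 : ∀ᶠ n : ℕ in atTop, 2 - Real.log c < L n := hLtop.eventually_gt_atTop _
  rw [eventually_atTop] at hb e1 e2 e3
  obtain ⟨N1, hb1⟩ := hb
  obtain ⟨N2, h1⟩ := e1
  obtain ⟨N3, h2⟩ := e2
  obtain ⟨N4, h3⟩ := e3
  refine ⟨max (max N1 N2) (max N3 (max N4 1)), fun n hn => ?_⟩
  have hnN1 := hb1 n (le_trans (le_max_of_le_left (le_max_left _ _)) hn)
  have h10 := h1 n (le_trans (le_max_of_le_left (le_max_right _ _)) hn)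
  have hl2 := h2 n (le_trans (le_max_of_le_right (le_max_left _ _)) hn)
  have hgap := h3 n (le_trans (le_max_of_le_right (le_max_of_le_right (le_max_left _ _))) hn)
  have hn1 : 1 ≤ n := le_trans (le_max_of_le_right (le_max_of_le_right (le_max_right _ _))) hn
  obtain ⟨hbx, hbeq⟩ := hnN1
  have hn0 : (0 : ℝ) < n := by exact_mod_cast hn1
  have hb0 : 0 < b n := lt_of_lt_of_le hx₁ hbx
  have hbτ : (0 : ℝ) < b n ^ τ := Real.rpow_pos_of_pos hb0 τ
  have hbα : (0 : ℝ) < b n ^ α := Real.rpow_pos_of_pos hb0 α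
  -- the basic logarithmic equation
  have hlogeq : Real.log K + α * Real.log (b n) - C * b n ^ τ = -Real.log n := by
    have h := congrArg Real.log hbeq
    rw [Real.log_mul (by positivity) (Real.exp_ne_zero _),
      Real.log_mul (ne_of_gt hK) (ne_of_gt hbα), Real.log_rpow hb0, Real.log_exp,
      one_div, Real.log_inv] at h
    linarith [h]
  set y : ℝ := C * τ / α * b n ^ τ with hy
  have hyc : c ≤ y := by
    have hx : x₁ ^ τ ≤ b n ^ τ := Real.rpow_le_rpow hx₁.le hbx hτ0.le
    rw [hc, hy]
    exact mul_le_mul_of_nonneg_left hx (by positivity)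
  have hy0 : 0 < y := lt_of_lt_of_le hc0 hyc
  have hgy : y - Real.log y = L n := by
    have hfn : L n = f n := hLfn n hn1
    have key : C * b n ^ τ = Real.log K + α * Real.log (b n) + Real.log n := by linarith
    have key2 : C * τ / α * b n ^ τ =
        τ / α * Real.log K + τ * Real.log (b n) + τ / α * Real.log n := by
      have h5 : C * τ / α * b n ^ τ = τ / α * (C * b n ^ τ) := by ring
      rw [h5, key]
      field_simp
    rw [hy, Real.log_mul (by positivity) (ne_of_gt hbτ), Real.log_rpow hb0, hfn, hfdef,
      Real.log_div (ne_of_gt hCτ) hαne]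
    simp only []
    linarith [key2]
  have hy2 : 2 ≤ y := by
    by_contra h
    push_neg at h
    have hlogy : Real.log c ≤ Real.log y := Real.log_le_log hc0 hyc
    have : L n ≤ 2 - Real.log c := by
      rw [← hgy]; linarith
    linarith
  have hcore := stmt_12_core (L n) y h10 hl2 hy2 hgy
  have hM1n : M₁ n = -L n := by simp [hLdef]
  have hM2n : M₂ n = Real.log (L n) := by rw [hM₂ n]
  have hLn0 : L n ≠ 0 := by linarith
  have hdiv : M₂ n / M₁ n = -(Real.log (L n) / L n) := by
    rw [hM1n, hM2n, div_neg]
  have hexp : y + M₁ n - M₂ n + M₂ n / M₁ n =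
      y - (L n + Real.log (L n) + Real.log (L n) / L n) := by
    rw [hdiv, hM1n, hM2n]; ring
  have hsq : (M₂ n / M₁ n) ^ 2 = (Real.log (L n) / L n) ^ 2 := by
    rw [hdiv, neg_sq]
  rw [hexp, hsq]
  exact hcore
end

section
/- Let F : ℝ → [0,1] be nondecreasing, let (a_n), (b_n) be real sequences with a_n > 0 such that for every x ∈ ℝ, lim_n F(a_n x + b_n)^n = Λ(x). If (a'_n), (b'_n) are real sequences with a'_n > 0, lim_n a_n/a'_n = 1 and lim_n (b_n − b'_n)/a_n = 0, then for every x ∈ ℝ, lim_n F(a'_n x + b'_n)^n = Λ(x). (Property 2: the sequences (a'_n) and (b'_n) are also norming constants for F.) -/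
open Filter Topology

/-!
Put `c_n := (a'_n x + b'_n - b_n) / a_n`, so that `a'_n x + b'_n = a_n c_n + b_n` and `c_n → x`.
The functions `y ↦ F(a_n y + b_n)^n` are monotone and converge pointwise to the continuous
function `Λ`; such a convergence is automatically continuous along sequences: sandwiching
`c_n` between fixed points `y < x < z` close to `x` gives `F(a_n c_n + b_n)^n → Λ(x)`.
-/

theorem Filter.Tendsto.apply_of_monotone {ι α β : Type*} {l : Filter ι}
    [TopologicalSpace α] [LinearOrder α] [OrderTopology α]
    [DenselyOrdered α] [NoMinOrder α] [NoMaxOrder α]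
    [TopologicalSpace β] [LinearOrder β] [OrderTopology β]
    {G : ι → α → β} {g : α → β} {c : ι → α} {x : α}
    (hGmono : ∀ i, Monotone (G i)) (hG : ∀ y, Tendsto (fun i => G i y) l (𝓝 (g y)))
    (hg : ContinuousAt g x) (hc : Tendsto c l (𝓝 x)) :
    Tendsto (fun i => G i (c i)) l (𝓝 (g x)) := by
  rw [tendsto_order]
  constructor
  · intro m hm
    obtain ⟨y, hyx, hmy⟩ := (hg.eventually (eventually_gt_nhds hm)).exists_lt
    filter_upwards [hc.eventually (eventually_ge_nhds hyx), (hG y).eventually (eventually_gt_nhds hmy)]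
      with i hyc hmG
    exact hmG.trans_le (hGmono i hyc)
  · intro m hm
    obtain ⟨z, hxz, hgz⟩ := (hg.eventually (eventually_lt_nhds hm)).exists_gt
    filter_upwards [hc.eventually (eventually_le_nhds hxz), (hG z).eventually (eventually_lt_nhds hgz)]
      with i hcz hGm
    exact (hGmono i hcz).trans_lt hGm

theorem tendsto_sub_div_of_norming_constants {ι : Type*} {l : Filter ι} {a b a' b' : ι → ℝ}
    (hratio : Tendsto (fun i => a i / a' i) l (𝓝 1))
    (hdiff : Tendsto (fun i => (b i - b' i) / a i) l (𝓝 0)) (x : ℝ) :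
    Tendsto (fun i => (a' i * x + b' i - b i) / a i) l (𝓝 x) := by
  have hinv : Tendsto (fun i => a' i / a i) l (𝓝 1) := by
    simpa using hratio.inv₀ one_ne_zero
  have key : (fun i => (a' i * x + b' i - b i) / a i) = fun i => a' i / a i * x - (b i - b' i) / a i := by
    funext i; ring
  rw [key]
  simpa using (hinv.mul_const x).sub hdiff

theorem monotone_pow_comp_affine {F : ℝ → ℝ} (hF0 : ∀ x, 0 ≤ F x) (hFmono : Monotone F)
    {a : ℝ} (ha : 0 ≤ a) (b : ℝ) (n : ℕ) : Monotone fun y => F (a * y + b) ^ n :=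
  fun _ _ hyz => pow_le_pow_left₀ (hF0 _) (hFmono (by gcongr)) n

theorem stmt_14_general (F : ℝ → ℝ) (hF01 : ∀ x, F x ∈ Set.Icc (0 : ℝ) 1) (hFmono : Monotone F)
    (a b a' b' : ℕ → ℝ) (ha : ∀ n, 0 < a n)
    (hconv : ∀ x : ℝ,
      Tendsto (fun n : ℕ => F (a n * x + b n) ^ n) atTop
        (nhds (Real.exp (-Real.exp (-x)))))
    (hratio : Tendsto (fun n => a n / a' n) atTop (nhds 1))
    (hdiff : Tendsto (fun n => (b n - b' n) / a n) atTop (nhds 0)) :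
    ∀ x : ℝ,
      Tendsto (fun n : ℕ => F (a' n * x + b' n) ^ n) atTop
        (nhds (Real.exp (-Real.exp (-x)))) := by
  intro x
  have hlim := Tendsto.apply_of_monotone
    (fun n => monotone_pow_comp_affine (fun y => (hF01 y).1) hFmono (ha n).le (b n) n)
    hconv (by fun_prop) (tendsto_sub_div_of_norming_constants hratio hdiff x)
  refine hlim.congr fun n => ?_
  congr 2
  field_simp [(ha n).ne']
  ring

/-- Property 2: if `F(a_n x + b_n)^n → Λ(x)` for every `x`, `a_n/a'_n → 1` and
`(b_n - b'_n)/a_n → 0`, then also `F(a'_n x + b'_n)^n → Λ(x)` for every `x`;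
that is, `(a'_n)` and `(b'_n)` are also norming constants for `F`. -/
theorem stmt_14 (F : ℝ → ℝ) (hF01 : ∀ x, F x ∈ Set.Icc (0 : ℝ) 1) (hFmono : Monotone F)
    (a b a' b' : ℕ → ℝ) (ha : ∀ n, 0 < a n) (ha' : ∀ n, 0 < a' n)
    (hconv : ∀ x : ℝ,
      Tendsto (fun n : ℕ => F (a n * x + b n) ^ n) atTop
        (nhds (Real.exp (-Real.exp (-x)))))
    (hratio : Tendsto (fun n => a n / a' n) atTop (nhds 1))
    (hdiff : Tendsto (fun n => (b n - b' n) / a n) atTop (nhds 0)) :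
    ∀ x : ℝ,
      Tendsto (fun n : ℕ => F (a' n * x + b' n) ^ n) atTop
        (nhds (Real.exp (-Real.exp (-x)))) :=
  stmt_14_general F hF01 hFmono a b a' b' ha hconv hratio hdiff
end

section
/- Let F, G : ℝ → [0,1] be right-continuous nondecreasing functions with F(x) < 1 and G(x) < 1 for all x (infinite right endpoints), and suppose lim_{x→∞} (1 − G(x))/(1 − F(x)) = 1. Let (a_n), (b_n) be real sequences with a_n > 0 and b_n → ∞ such that for every x ∈ ℝ, lim_n F(a_n x + b_n)^n = Λ(x), and assume a_n/b_n → 0. Then for every x ∈ ℝ, lim_n G(a_n x + b_n)^n = Λ(x). (Property 1: tail-equivalent distributions share the same norming constants for the Gumbel limit.) -/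
/-!
Writing `u_n = a_n x + b_n`, the hypothesis `a_n / b_n → 0` makes `u_n → ∞`. For `c_n ≥ 0`,
`c_n ^ n → e^{-t} > 0` is equivalent to `n (c_n - 1) → -t`, so the Gumbel limit for `F` says
`n (1 - F(u_n)) → e^{-x}`. Tail equivalence turns this into `n (1 - G(u_n)) → e^{-x}`, and the
converse direction (`Real.tendsto_one_add_pow_exp_of_tendsto`) gives `G(u_n) ^ n → Λ(x)`.
-/

open Filter Real Topology

lemma tendsto_add_mul_atTop_of_tendsto_div {α : Type*} {l : Filter α} {a b : α → ℝ}
    (hb : Tendsto b l atTop) (hab : Tendsto (fun n => a n / b n) l (𝓝 0)) (x : ℝ) :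
    Tendsto (fun n => a n * x + b n) l atTop := by
  have hfactor : Tendsto (fun n => 1 + a n / b n * x) l (𝓝 1) := by
    simpa using (hab.mul_const x).const_add 1
  refine (hb.atTop_mul_pos one_pos hfactor).congr' ?_
  filter_upwards [hb.eventually_ne_atTop 0] with n hn
  field_simp
  ring

lemma tendsto_nat_mul_sub_one_of_tendsto_nat_mul_log {c : ℕ → ℝ} {ℓ : ℝ}
    (hpos : ∀ᶠ n in atTop, 0 < c n) (h : Tendsto (fun n : ℕ => n * log (c n)) atTop (𝓝 ℓ)) :
    Tendsto (fun n : ℕ => n * (c n - 1)) atTop (𝓝 ℓ) := by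
  have hlog : Tendsto (fun n => log (c n)) atTop (𝓝 0) := by
    have := h.mul tendsto_inv_atTop_nhds_zero_nat
    rw [mul_zero] at this
    refine this.congr' ?_
    filter_upwards [eventually_ne_atTop 0] with n hn
    field_simp
  have hc : Tendsto c atTop (𝓝 1) := by
    have := (continuous_exp.tendsto 0).comp hlog
    rw [exp_zero] at this
    refine this.congr' ?_
    filter_upwards [hpos] with n hn
    exact exp_log hn
  have hupper : Tendsto (fun n : ℕ => c n * (n * log (c n))) atTop (𝓝 ℓ) := by
    simpa using hc.mul h
  -- `log c ≤ c - 1 ≤ c log c` for `c > 0`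
  refine tendsto_of_tendsto_of_tendsto_of_le_of_le' h hupper ?_ ?_
  · filter_upwards [hpos] with n hn
    exact mul_le_mul_of_nonneg_left (log_le_sub_one_of_pos hn) n.cast_nonneg
  · filter_upwards [hpos] with n hn
    have hmul : c n - 1 ≤ c n * log (c n) :=
      calc c n - 1 = c n * (1 - (c n)⁻¹) := by field_simp
        _ ≤ c n * log (c n) := mul_le_mul_of_nonneg_left (one_sub_inv_le_log_of_pos hn) hn.le
    calc (n : ℝ) * (c n - 1) ≤ n * (c n * log (c n)) :=
          mul_le_mul_of_nonneg_left hmul n.cast_nonneg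
      _ = c n * (n * log (c n)) := by ring

lemma tendsto_nat_mul_sub_one_of_tendsto_pow {c : ℕ → ℝ} {L : ℝ} (hc : ∀ n, 0 ≤ c n)
    (hL : 0 < L) (h : Tendsto (fun n => c n ^ n) atTop (𝓝 L)) :
    Tendsto (fun n : ℕ => n * (c n - 1)) atTop (𝓝 (log L)) := by
  have hpos : ∀ᶠ n in atTop, 0 < c n := by
    filter_upwards [h.eventually (eventually_gt_nhds hL), eventually_ne_atTop 0] with n hn hn0
    refine (hc n).lt_of_ne fun h0 => ?_
    rw [← h0, zero_pow hn0] at hn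
    exact lt_irrefl 0 hn
  refine tendsto_nat_mul_sub_one_of_tendsto_nat_mul_log hpos ?_
  simpa only [Function.comp_def, log_pow] using ((continuousAt_log hL.ne').tendsto.comp h)

lemma tendsto_nat_mul_sub_one_of_tendsto_div {c d : ℕ → ℝ} {ℓ : ℝ} (hc : ∀ n, c n ≠ 1)
    (h : Tendsto (fun n : ℕ => n * (c n - 1)) atTop (𝓝 ℓ))
    (hdc : Tendsto (fun n => (1 - d n) / (1 - c n)) atTop (𝓝 1)) :
    Tendsto (fun n : ℕ => n * (d n - 1)) atTop (𝓝 ℓ) := by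
  have hprod := hdc.mul h
  rw [one_mul] at hprod
  refine hprod.congr fun n => ?_
  have : 1 - c n ≠ 0 := sub_ne_zero.mpr (hc n).symm
  field_simp
  ring

theorem stmt_15_general (F G : ℝ → ℝ)
    (hF01 : ∀ x, F x ∈ Set.Icc (0 : ℝ) 1)
    (hFlt : ∀ x, F x < 1)
    (htail : Tendsto (fun x : ℝ => (1 - G x) / (1 - F x)) atTop (nhds 1))
    (a b : ℕ → ℝ) (hbtop : Tendsto b atTop atTop)
    (hconv : ∀ x : ℝ,
      Tendsto (fun n : ℕ => F (a n * x + b n) ^ n) atTop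
        (nhds (Real.exp (-Real.exp (-x)))))
    (hab : Tendsto (fun n => a n / b n) atTop (nhds 0)) :
    ∀ x : ℝ,
      Tendsto (fun n : ℕ => G (a n * x + b n) ^ n) atTop
        (nhds (Real.exp (-Real.exp (-x)))) := by
  intro x
  have hu := tendsto_add_mul_atTop_of_tendsto_div hbtop hab x
  have hF := tendsto_nat_mul_sub_one_of_tendsto_pow (fun n => (hF01 _).1) (exp_pos _) (hconv x)
  rw [log_exp] at hF
  have hG := tendsto_nat_mul_sub_one_of_tendsto_div (fun n => (hFlt _).ne) hF (htail.comp hu)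
  simpa using tendsto_one_add_pow_exp_of_tendsto hG

/-- Property 1 (simplification by tail equivalence): if `F` and `G` are right-continuous
nondecreasing functions with values in `[0,1]`, everywhere `< 1`, right tail equivalent
(`(1 - G(x))/(1 - F(x)) → 1` as `x → ∞`), and if `F(a_n x + b_n)^n → Λ(x)` for
norming constants with `a_n > 0`, `b_n → ∞` and `a_n/b_n → 0`, then also
`G(a_n x + b_n)^n → Λ(x)` for every `x`. -/
theorem stmt_15 (F G : ℝ → ℝ)
    (hF01 : ∀ x, F x ∈ Set.Icc (0 : ℝ) 1) (hG01 : ∀ x, G x ∈ Set.Icc (0 : ℝ) 1)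
    (hFmono : Monotone F) (hGmono : Monotone G)
    (hFrc : ∀ x : ℝ, ContinuousWithinAt F (Set.Ici x) x)
    (hGrc : ∀ x : ℝ, ContinuousWithinAt G (Set.Ici x) x)
    (hFlt : ∀ x, F x < 1) (hGlt : ∀ x, G x < 1)
    (htail : Tendsto (fun x : ℝ => (1 - G x) / (1 - F x)) atTop (nhds 1))
    (a b : ℕ → ℝ) (ha : ∀ n, 0 < a n) (hbtop : Tendsto b atTop atTop)
    (hconv : ∀ x : ℝ,
      Tendsto (fun n : ℕ => F (a n * x + b n) ^ n) atTop
        (nhds (Real.exp (-Real.exp (-x)))))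
    (hab : Tendsto (fun n => a n / b n) atTop (nhds 0)) :
    ∀ x : ℝ,
      Tendsto (fun n : ℕ => G (a n * x + b n) ^ n) atTop
        (nhds (Real.exp (-Real.exp (-x)))) :=
  stmt_15_general F G hF01 hFlt htail a b hbtop hconv hab
end
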